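/- arXiv:2305.05182 — 5 statements merged into one kernel-verified Lean document; each statement's English description precedes it below -/
import Mathlib

section
/- Let α ∈ (0,1) and μ > 1/2, and write D := ∂_φ − ∂_β. There exist constants c, C > 0 depending only on α and μ such that for every C¹ function H : (0,∞) × 𝕋 → ℂ, c·(‖β^{2μ}DH‖_{C_β^α} + ‖β^{2μ−1}∂_φH‖_{C_β^α} + ‖⟨β⟩^α β^{2μ−1}H‖_{L^∞}) ≤ ‖β^{2μ}DH‖_{C_β^α} + ‖β^{2μ−1}∂_φH‖_{C_β^α} + ‖β^{2μ−1}H‖_{C_β^α} ≤ C·(‖β^{2μ}DH‖_{C_β^α} + ‖β^{2μ−1}∂_φH‖_{C_β^α} + ‖⟨β⟩^α β^{2μ−1}H‖_{L^∞}); in particular one side is finite if and only if the other is. -/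
open MeasureTheory Filter Set
open scoped ENNReal

noncomputable def jap (β : ℝ) : ℝ := Real.sqrt (β ^ 2 + 1)

noncomputable def wSupNorm (w : ℝ → ℝ) (f : ℝ → ℝ → ℂ) : ℝ≥0∞ :=
  ⨆ (β : ℝ) (_ : 0 < β) (φ : ℝ), ENNReal.ofReal (w β * ‖f β φ‖)

noncomputable def holderSemi (α : ℝ) (f : ℝ → ℝ → ℂ) : ℝ≥0∞ :=
  ⨆ (φ : ℝ) (β₁ : ℝ) (β₂ : ℝ) (_ : 0 < β₂) (_ : β₂ < β₁) (_ : β₁ < 2 * β₂)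
      (_ : β₁ - β₂ < 1),
    ENNReal.ofReal ((β₁ + β₂) ^ α * ‖f β₁ φ - f β₂ φ‖ / (β₁ - β₂) ^ α)

noncomputable def CbNorm (α : ℝ) (f : ℝ → ℝ → ℂ) : ℝ≥0∞ :=
  wSupNorm (fun β => jap β ^ α) f + holderSemi α f

def Periodic2 (f : ℝ → ℝ → ℂ) : Prop := ∀ β φ, f β (φ + 2 * Real.pi) = f β φ

def ContOn2 (f : ℝ → ℝ → ℂ) : Prop :=
  ContinuousOn (fun p : ℝ × ℝ => f p.1 p.2) (Set.Ioi 0 ×ˢ Set.univ)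

noncomputable def X0Norm (α μ : ℝ) (H Hβ Hφ : ℝ → ℝ → ℂ) : ℝ≥0∞ :=
  CbNorm α (fun β φ => (β ^ (2*μ) : ℝ) • (Hφ β φ - Hβ β φ)) +
    CbNorm α (fun β φ => (β ^ (2*μ - 1) : ℝ) • Hφ β φ) +
    CbNorm α (fun β φ => (β ^ (2*μ - 1) : ℝ) • H β φ)

noncomputable def X0NormAux (α μ : ℝ) (H Hβ Hφ : ℝ → ℝ → ℂ) : ℝ≥0∞ :=
  CbNorm α (fun β φ => (β ^ (2*μ) : ℝ) • (Hφ β φ - Hβ β φ)) +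
    CbNorm α (fun β φ => (β ^ (2*μ - 1) : ℝ) • Hφ β φ) +
    wSupNorm (fun β => jap β ^ α * β ^ (2*μ - 1)) H

/-!
On a dyadic pair `β₂ < β₁ < 2 β₂` with `β₁ - β₂ < 1`, the Hölder quotient of
`g(β) = β^(2μ-1) H(β, φ)` is controlled by the mean value theorem. Writing
`H_β = H_φ - D H`, the derivative satisfies
`⟨β⟩^α β |g'(β)| ≤ (2μ-1) ‖⟨β⟩^α β^(2μ-1) H‖ + ‖⟨β⟩^α β^(2μ) D H‖ + β ‖⟨β⟩^α β^(2μ-1) ∂_φ H‖`,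
and the interpolation `β₂^α (β₁ - β₂)^(1-α) ≤ min(β₂, ⟨β₂⟩^α)` absorbs the factor `β` in
front of the last term. Hence the Hölder seminorm of `β^(2μ-1) H` is bounded by the other
three quantities, which gives the upper bound; the lower bound holds with `c = 1`.
-/

lemma one_le_jap (β : ℝ) : 1 ≤ jap β :=
  Real.one_le_sqrt.mpr (le_add_of_nonneg_left (sq_nonneg β))

lemma jap_pos (β : ℝ) : 0 < jap β :=
  one_pos.trans_le (one_le_jap β)

lemma jap_le_jap {a b : ℝ} (ha : 0 ≤ a) (hab : a ≤ b) : jap a ≤ jap b :=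
  Real.sqrt_le_sqrt (by nlinarith)

lemma self_le_jap (β : ℝ) : β ≤ jap β :=
  Real.le_sqrt_of_sq_le (by linarith)

lemma rpow_mul_rpow_one_sub_le {α β d : ℝ} (hα : α ≤ 1) (hd : 0 ≤ d)
    (hdβ : d ≤ β) : β ^ α * d ^ (1 - α) ≤ β := by
  calc β ^ α * d ^ (1 - α) ≤ β ^ α * β ^ (1 - α) :=
        mul_le_mul_of_nonneg_left (Real.rpow_le_rpow hd hdβ (sub_nonneg.mpr hα))
          (Real.rpow_nonneg (hd.trans hdβ) α)
    _ = β := by rw [← Real.rpow_add' (hd.trans hdβ) (by norm_num)]; norm_num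

lemma ofReal_le_wSupNorm (w : ℝ → ℝ) (f : ℝ → ℝ → ℂ) {β : ℝ} (hβ : 0 < β) (φ : ℝ) :
    ENNReal.ofReal (w β * ‖f β φ‖) ≤ wSupNorm w f :=
  le_iSup_of_le β (le_iSup_of_le hβ (le_iSup_of_le φ le_rfl))

lemma mul_norm_le_toReal_of_wSupNorm_le {w : ℝ → ℝ} {f : ℝ → ℝ → ℂ} {S : ℝ≥0∞}
    (h : wSupNorm w f ≤ S) (hS : S ≠ ⊤) {β : ℝ} (hβ : 0 < β) (φ : ℝ) :
    w β * ‖f β φ‖ ≤ S.toReal :=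
  (ENNReal.ofReal_le_iff_le_toReal hS).mp ((ofReal_le_wSupNorm w f hβ φ).trans h)

lemma wSupNorm_mul_rpow (a p : ℝ) (H : ℝ → ℝ → ℂ) :
    wSupNorm (fun β => jap β ^ a * β ^ p) H
      = wSupNorm (fun β => jap β ^ a) (fun β φ => (β ^ p : ℝ) • H β φ) := by
  unfold wSupNorm
  refine iSup_congr fun β => iSup_congr fun hβ => iSup_congr fun φ => ?_
  rw [norm_smul, Real.norm_eq_abs, abs_of_pos (Real.rpow_pos_of_pos hβ p), mul_assoc]

lemma holderSemi_le_ofReal {α K : ℝ} {f : ℝ → ℝ → ℂ}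
    (h : ∀ φ β₁ β₂ : ℝ, 0 < β₂ → β₂ < β₁ → β₁ < 2 * β₂ → β₁ - β₂ < 1 →
      (β₁ + β₂) ^ α * ‖f β₁ φ - f β₂ φ‖ / (β₁ - β₂) ^ α ≤ K) :
    holderSemi α f ≤ ENNReal.ofReal K :=
  iSup_le fun φ => iSup_le fun β₁ => iSup_le fun β₂ => iSup_le fun h₂ => iSup_le fun h₂₁ =>
    iSup_le fun h₁ => iSup_le fun hd => ENNReal.ofReal_le_ofReal (h φ β₁ β₂ h₂ h₂₁ h₁ hd)

lemma norm_sub_le_of_weighted_deriv_le {α P Q : ℝ} (hα : 0 ≤ α) (hQ : 0 ≤ Q) {g g' : ℝ → ℂ}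
    (hg : ∀ b, 0 < b → HasDerivAt g (g' b) b)
    (hg' : ∀ b, 0 < b → jap b ^ α * b * ‖g' b‖ ≤ P + Q * b)
    {β₁ β₂ : ℝ} (h₂ : 0 < β₂) (h₂₁ : β₂ ≤ β₁) (h₁ : β₁ ≤ 2 * β₂) :
    ‖g β₁ - g β₂‖ ≤ (P + 2 * Q * β₂) / (jap β₂ ^ α * β₂) * (β₁ - β₂) := by
  have hbound : ∀ b ∈ Icc β₂ β₁, ‖g' b‖ ≤ (P + 2 * Q * β₂) / (jap β₂ ^ α * β₂) := by
    rintro b ⟨hb₂, hb₁⟩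
    have hb : 0 < b := h₂.trans_le hb₂
    have hweight : jap β₂ ^ α * β₂ ≤ jap b ^ α * b :=
      mul_le_mul (Real.rpow_le_rpow (jap_pos β₂).le (jap_le_jap h₂.le hb₂) hα) hb₂ h₂.le
        (Real.rpow_nonneg (jap_pos b).le α)
    rw [le_div_iff₀ (by have := jap_pos β₂; positivity)]
    calc ‖g' b‖ * (jap β₂ ^ α * β₂) ≤ ‖g' b‖ * (jap b ^ α * b) := by gcongr
      _ = jap b ^ α * b * ‖g' b‖ := by ring
      _ ≤ P + Q * b := hg' b hb
      _ ≤ P + 2 * Q * β₂ := by nlinarith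
  have := (convex_Icc β₂ β₁).norm_image_sub_le_of_norm_hasDerivWithin_le
    (fun b hb => (hg b (h₂.trans_le hb.1)).hasDerivWithinAt) hbound
    ⟨le_rfl, h₂₁⟩ ⟨h₂₁, le_rfl⟩
  rwa [Real.norm_eq_abs, abs_of_nonneg (sub_nonneg.mpr h₂₁)] at this

lemma holder_quotient_le_of_weighted_deriv_le {α P Q : ℝ} (hα : α ∈ Icc (0 : ℝ) 1)
    (hP : 0 ≤ P) (hQ : 0 ≤ Q) {g g' : ℝ → ℂ}
    (hg : ∀ b, 0 < b → HasDerivAt g (g' b) b)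
    (hg' : ∀ b, 0 < b → jap b ^ α * b * ‖g' b‖ ≤ P + Q * b)
    {β₁ β₂ : ℝ} (h₂ : 0 < β₂) (h₂₁ : β₂ < β₁) (h₁ : β₁ < 2 * β₂) (hd : β₁ - β₂ < 1) :
    (β₁ + β₂) ^ α * ‖g β₁ - g β₂‖ / (β₁ - β₂) ^ α ≤ 3 ^ α * (P + 2 * Q) := by
  set d := β₁ - β₂
  have hd₀ : 0 < d := sub_pos.mpr h₂₁
  have hjap : 1 ≤ jap β₂ ^ α := Real.one_le_rpow (one_le_jap β₂) hα.1
  have hX : β₂ ^ α * d ^ (1 - α) ≤ β₂ := rpow_mul_rpow_one_sub_le hα.2 hd₀.le (by linarith)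
  have hX' : β₂ ^ α * d ^ (1 - α) ≤ jap β₂ ^ α :=
    calc β₂ ^ α * d ^ (1 - α) ≤ β₂ ^ α :=
          mul_le_of_le_one_right (by positivity)
            (Real.rpow_le_one hd₀.le hd.le (by linarith [hα.2]))
      _ ≤ jap β₂ ^ α := Real.rpow_le_rpow h₂.le (self_le_jap β₂) hα.1
  have hsum : (β₁ + β₂) ^ α ≤ 3 ^ α * β₂ ^ α := by
    rw [← Real.mul_rpow (by norm_num) h₂.le]
    exact Real.rpow_le_rpow (by linarith) (by linarith) hα.1
  have hmvt := norm_sub_le_of_weighted_deriv_le hα.1 hQ hg hg' h₂ h₂₁.le h₁.le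
  calc (β₁ + β₂) ^ α * ‖g β₁ - g β₂‖ / d ^ α
      ≤ 3 ^ α * β₂ ^ α * ((P + 2 * Q * β₂) / (jap β₂ ^ α * β₂) * d) / d ^ α := by gcongr
    _ = 3 ^ α * (P * (β₂ ^ α * d ^ (1 - α) / β₂) / jap β₂ ^ α
          + 2 * Q * (β₂ ^ α * d ^ (1 - α) / jap β₂ ^ α)) := by
        rw [Real.rpow_sub hd₀, Real.rpow_one]
        field_simp
    _ ≤ 3 ^ α * (P * 1 / 1 + 2 * Q * 1) := by
        gcongr
        · exact (div_le_one h₂).mpr hX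
        · exact (div_le_one (by positivity)).mpr hX'
    _ = 3 ^ α * (P + 2 * Q) := by ring

lemma weighted_norm_deriv_rpow_smul_le {r w b : ℝ} (hr : 0 ≤ r) (hw : 0 ≤ w) (hb : 0 < b)
    (x y z : ℂ) :
    w * b * ‖(b ^ r : ℝ) • y + (r * b ^ (r - 1) : ℝ) • x‖
      ≤ r * (w * ‖(b ^ r : ℝ) • x‖) + w * ‖(b ^ (r + 1) : ℝ) • (z - y)‖
        + b * (w * ‖(b ^ r : ℝ) • z‖) := by
  have norm_smul_of_nonneg {s : ℝ} (v : ℂ) (hs : 0 ≤ s) : ‖s • v‖ = s * ‖v‖ := by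
    rw [norm_smul, Real.norm_eq_abs, abs_of_nonneg hs]
  have hbr : 0 ≤ b ^ r := Real.rpow_nonneg hb.le r
  have hbr' : 0 ≤ r * b ^ (r - 1) := mul_nonneg hr (Real.rpow_nonneg hb.le _)
  have hsucc : b ^ (r + 1) = b ^ r * b := Real.rpow_add_one hb.ne' r
  have hpred : b ^ (r - 1) * b = b ^ r := by
    rw [← Real.rpow_add_one hb.ne', sub_add_cancel]
  have hy : ‖y‖ ≤ ‖z‖ + ‖z - y‖ := by
    simpa using norm_sub_le z (z - y)
  rw [norm_smul_of_nonneg x hbr, norm_smul_of_nonneg z hbr,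
    norm_smul_of_nonneg (z - y) (Real.rpow_nonneg hb.le _)]
  calc w * b * ‖(b ^ r : ℝ) • y + (r * b ^ (r - 1) : ℝ) • x‖
      ≤ w * b * (b ^ r * ‖y‖ + r * b ^ (r - 1) * ‖x‖) := by
        gcongr
        refine (norm_add_le _ _).trans_eq ?_
        rw [norm_smul_of_nonneg y hbr, norm_smul_of_nonneg x hbr']
    _ = w * (b ^ r * b) * ‖y‖ + r * (w * (b ^ (r - 1) * b) * ‖x‖) := by ring
    _ ≤ w * (b ^ r * b) * (‖z‖ + ‖z - y‖) + r * (w * (b ^ (r - 1) * b) * ‖x‖) := by gcongr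
    _ = _ := by rw [hpred, hsucc]; ring

lemma holderSemi_rpow_smul_le {α r A B M : ℝ} (hα : α ∈ Icc (0 : ℝ) 1) (hr : 0 ≤ r)
    {H Hβ Hφ : ℝ → ℝ → ℂ}
    (hHβ : ∀ β φ : ℝ, 0 < β → HasDerivAt (fun b => H b φ) (Hβ β φ) β)
    (hA : ∀ β φ : ℝ, 0 < β → jap β ^ α * ‖(β ^ r : ℝ) • H β φ‖ ≤ A)
    (hB : ∀ β φ : ℝ, 0 < β → jap β ^ α * ‖(β ^ r : ℝ) • Hφ β φ‖ ≤ B)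
    (hM : ∀ β φ : ℝ, 0 < β → jap β ^ α * ‖(β ^ (r + 1) : ℝ) • (Hφ β φ - Hβ β φ)‖ ≤ M) :
    holderSemi α (fun β φ => (β ^ r : ℝ) • H β φ)
      ≤ ENNReal.ofReal (3 ^ α * (r * A + M + 2 * B)) := by
  have nonneg_of_bound {f : ℝ → ℝ → ℂ} {K : ℝ}
      (hf : ∀ β φ : ℝ, 0 < β → jap β ^ α * ‖f β φ‖ ≤ K) : 0 ≤ K :=
    (mul_nonneg (Real.rpow_nonneg (jap_pos 1).le α) (norm_nonneg _)).trans (hf 1 0 one_pos)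
  refine holderSemi_le_ofReal fun φ β₁ β₂ h₂ h₂₁ h₁ hd => ?_
  refine holder_quotient_le_of_weighted_deriv_le hα
    (add_nonneg (mul_nonneg hr (nonneg_of_bound hA)) (nonneg_of_bound hM)) (nonneg_of_bound hB)
    (g' := fun b => (b ^ r : ℝ) • Hβ b φ + (r * b ^ (r - 1) : ℝ) • H b φ)
    (fun b hb => (Real.hasDerivAt_rpow_const (Or.inl hb.ne')).smul (hHβ b φ hb))
    (fun b hb => ?_) h₂ h₂₁ h₁ hd
  have hw : 0 ≤ jap b ^ α := Real.rpow_nonneg (jap_pos b).le α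
  refine (weighted_norm_deriv_rpow_smul_le hr hw hb (H b φ) (Hβ b φ) (Hφ b φ)).trans ?_
  linarith [mul_le_mul_of_nonneg_left (hA b φ hb) hr, hM b φ hb,
    mul_le_mul_of_nonneg_left (hB b φ hb) hb.le]

theorem statement5 (α μ : ℝ) (hα : α ∈ Set.Ioo (0:ℝ) 1) (hμ : 1/2 < μ) :
    ∃ c > (0:ℝ), ∃ C > (0:ℝ), ∀ H Hβ Hφ : ℝ → ℝ → ℂ,
      ContOn2 H → ContOn2 Hβ → ContOn2 Hφ → Periodic2 H →
      (∀ β φ : ℝ, 0 < β → HasDerivAt (fun b => H b φ) (Hβ β φ) β) →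
      (∀ β φ : ℝ, 0 < β → HasDerivAt (fun p => H β p) (Hφ β φ) φ) →
      (ENNReal.ofReal c * X0NormAux α μ H Hβ Hφ ≤ X0Norm α μ H Hβ Hφ ∧
        X0Norm α μ H Hβ Hφ ≤ ENNReal.ofReal C * X0NormAux α μ H Hβ Hφ) := by
  set K : ℝ := 3 ^ α * (2 * μ + 2)
  have hK : 0 ≤ K := by have := hα.1; positivity
  refine ⟨1, one_pos, 1 + K, by positivity, fun H Hβ Hφ _ _ _ _ hHβ _ => ?_⟩
  set T := X0NormAux α μ H Hβ Hφ
  have hsplit : X0Norm α μ H Hβ Hφ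
      = T + holderSemi α (fun β φ => (β ^ (2 * μ - 1) : ℝ) • H β φ) := by
    rw [X0Norm, CbNorm.eq_def α (fun β φ => (β ^ (2 * μ - 1) : ℝ) • H β φ),
      ← wSupNorm_mul_rpow, ← add_assoc]
    rfl
  refine ⟨by rw [hsplit, ENNReal.ofReal_one, one_mul]; exact le_self_add, ?_⟩
  rcases eq_or_ne T ⊤ with hT | hT
  · rw [hT, ENNReal.mul_top (by simp; positivity)]
    exact le_top
  have bound {f : ℝ → ℝ → ℂ} (hf : wSupNorm (fun β => jap β ^ α) f ≤ T) :
      ∀ β φ : ℝ, 0 < β → jap β ^ α * ‖f β φ‖ ≤ T.toReal :=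
    fun β φ hβ => mul_norm_le_toReal_of_wSupNorm_le hf hT hβ φ
  have hS := holderSemi_rpow_smul_le ⟨hα.1.le, hα.2.le⟩ (by linarith : 0 ≤ 2 * μ - 1) hHβ
    (bound (by rw [← wSupNorm_mul_rpow]; exact le_add_self))
    (bound (le_self_add.trans (le_add_self.trans le_self_add)))
    (bound (by rw [sub_add_cancel]; exact le_self_add.trans (le_self_add.trans le_self_add)))
  rw [show 3 ^ α * ((2 * μ - 1) * T.toReal + T.toReal + 2 * T.toReal) = K * T.toReal by ring,
    ENNReal.ofReal_mul hK, ENNReal.ofReal_toReal hT] at hS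
  calc X0Norm α μ H Hβ Hφ ≤ T + ENNReal.ofReal K * T := hsplit ▸ add_le_add le_rfl hS
    _ = ENNReal.ofReal (1 + K) * T := by
        rw [ENNReal.ofReal_add zero_le_one hK, ENNReal.ofReal_one, add_mul, one_mul]
end

section
/- Let α ∈ (0,1). There exists C = C(α) > 0, independent of m, such that for every m ∈ ℕ₊ and all m-fold symmetric functions f₁, f₂ ∈ C_β^α on (0,∞) × 𝕋: ‖P₀(f₁f₂)‖_{C_β^α} + m^{1/2}‖P_≠(f₁f₂)‖_{C_β^α} ≤ C·(‖P₀f₁‖_{C_β^α} + m^{1/2}‖P_≠f₁‖_{C_β^α})·(‖P₀f₂‖_{C_β^α} + m^{1/2}‖P_≠f₂‖_{C_β^α}). -/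
open MeasureTheory Filter Set
open scoped ENNReal

noncomputable def P0 (f : ℝ → ℝ → ℂ) (β : ℝ) : ℂ :=
  (1 / (2 * Real.pi) : ℝ) • ∫ φ in (0:ℝ)..(2 * Real.pi), f β φ

/-! ### Auxiliary lemmas -/

lemma one_le_japrpow {α : ℝ} (hα : 0 ≤ α) (β : ℝ) : 1 ≤ jap β ^ α :=
  Real.one_le_rpow (by rw [jap, Real.one_le_sqrt]; nlinarith [sq_nonneg β]) hα

lemma japrpow_pos {α : ℝ} (hα : 0 ≤ α) (β : ℝ) : 0 < jap β ^ α :=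
  lt_of_lt_of_le one_pos (one_le_japrpow hα β)

lemma japrpow_nonneg (α β : ℝ) : 0 ≤ jap β ^ α :=
  Real.rpow_nonneg (Real.sqrt_nonneg _) _

lemma le_wSupNorm {w : ℝ → ℝ} {f : ℝ → ℝ → ℂ} {β : ℝ} (hβ : 0 < β) (φ : ℝ) :
    ENNReal.ofReal (w β * ‖f β φ‖) ≤ wSupNorm w f :=
  le_iSup_of_le β (le_iSup_of_le hβ (le_iSup_of_le φ le_rfl))

lemma le_holderSemi {α : ℝ} {f : ℝ → ℝ → ℂ} (φ : ℝ) {β₁ β₂ : ℝ} (h0 : 0 < β₂)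
    (h1 : β₂ < β₁) (h2 : β₁ < 2 * β₂) (h3 : β₁ - β₂ < 1) :
    ENNReal.ofReal ((β₁ + β₂) ^ α * ‖f β₁ φ - f β₂ φ‖ / (β₁ - β₂) ^ α) ≤ holderSemi α f :=
  le_iSup_of_le φ (le_iSup_of_le β₁ (le_iSup_of_le β₂ (le_iSup_of_le h0
    (le_iSup_of_le h1 (le_iSup_of_le h2 (le_iSup_of_le h3 le_rfl))))))

lemma wSupNorm_le {w : ℝ → ℝ} {f : ℝ → ℝ → ℂ} {M : ℝ≥0∞}
    (h : ∀ β, 0 < β → ∀ φ, ENNReal.ofReal (w β * ‖f β φ‖) ≤ M) : wSupNorm w f ≤ M :=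
  iSup_le fun β => iSup_le fun hβ => iSup_le fun φ => h β hβ φ

lemma holderSemi_le {α : ℝ} {f : ℝ → ℝ → ℂ} {M : ℝ≥0∞}
    (h : ∀ φ β₁ β₂, 0 < β₂ → β₂ < β₁ → β₁ < 2 * β₂ → β₁ - β₂ < 1 →
      ENNReal.ofReal ((β₁ + β₂) ^ α * ‖f β₁ φ - f β₂ φ‖ / (β₁ - β₂) ^ α) ≤ M) :
    holderSemi α f ≤ M :=
  iSup_le fun φ => iSup_le fun β₁ => iSup_le fun β₂ => iSup_le fun h0 => iSup_le fun h1 =>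
    iSup_le fun h2 => iSup_le fun h3 => h φ β₁ β₂ h0 h1 h2 h3

lemma wSupNorm_le_CbNorm (α : ℝ) (f : ℝ → ℝ → ℂ) :
    wSupNorm (fun β => jap β ^ α) f ≤ CbNorm α f := le_self_add

lemma holderSemi_le_CbNorm (α : ℝ) (f : ℝ → ℝ → ℂ) : holderSemi α f ≤ CbNorm α f := le_add_self

/-- Congruence: CbNorm only depends on values at β > 0. -/
lemma CbNorm_congr {α : ℝ} {f g : ℝ → ℝ → ℂ} (h : ∀ β, 0 < β → ∀ φ, f β φ = g β φ) :
    CbNorm α f = CbNorm α g := by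
  have key : ∀ f g : ℝ → ℝ → ℂ, (∀ β, 0 < β → ∀ φ, f β φ = g β φ) →
      CbNorm α f ≤ CbNorm α g := by
    intro f g h
    refine add_le_add ?_ ?_
    · refine wSupNorm_le fun β hβ φ => ?_
      rw [show f β φ = g β φ from h β hβ φ]
      exact le_wSupNorm hβ φ
    · refine holderSemi_le fun φ β₁ β₂ h0 h1 h2 h3 => ?_
      rw [show f β₁ φ = g β₁ φ from h β₁ (h0.trans h1) φ,
        show f β₂ φ = g β₂ φ from h β₂ h0 φ]
      exact le_holderSemi φ h0 h1 h2 h3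
  exact le_antisymm (key f g h) (key g f fun β hβ φ => (h β hβ φ).symm)

/-- Subadditivity of CbNorm. -/
lemma CbNorm_add {α : ℝ} (f g : ℝ → ℝ → ℂ) :
    CbNorm α (fun β φ => f β φ + g β φ) ≤ CbNorm α f + CbNorm α g := by
  have hw : wSupNorm (fun β => jap β ^ α) (fun β φ => f β φ + g β φ) ≤
      wSupNorm (fun β => jap β ^ α) f + wSupNorm (fun β => jap β ^ α) g := by
    refine wSupNorm_le fun β hβ φ => ?_
    have hJ : (0:ℝ) ≤ jap β ^ α := japrpow_nonneg α β
    calc ENNReal.ofReal (jap β ^ α * ‖f β φ + g β φ‖)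
        ≤ ENNReal.ofReal (jap β ^ α * ‖f β φ‖ + jap β ^ α * ‖g β φ‖) := by
          refine ENNReal.ofReal_le_ofReal ?_
          rw [← mul_add]
          exact mul_le_mul_of_nonneg_left (norm_add_le _ _) hJ
      _ = ENNReal.ofReal (jap β ^ α * ‖f β φ‖) + ENNReal.ofReal (jap β ^ α * ‖g β φ‖) :=
          ENNReal.ofReal_add (mul_nonneg hJ (norm_nonneg _)) (mul_nonneg hJ (norm_nonneg _))
      _ ≤ _ := add_le_add (le_wSupNorm hβ φ) (le_wSupNorm hβ φ)
  have hh : holderSemi α (fun β φ => f β φ + g β φ) ≤ holderSemi α f + holderSemi α g := by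
    refine holderSemi_le fun φ β₁ β₂ h0 h1 h2 h3 => ?_
    have hS : (0:ℝ) < β₁ + β₂ := by linarith
    have hD : (0:ℝ) < β₁ - β₂ := by linarith
    have hSα : (0:ℝ) ≤ (β₁+β₂)^α := (Real.rpow_pos_of_pos hS α).le
    have hDα : (0:ℝ) < (β₁-β₂)^α := Real.rpow_pos_of_pos hD α
    calc ENNReal.ofReal ((β₁ + β₂) ^ α * ‖(f β₁ φ + g β₁ φ) - (f β₂ φ + g β₂ φ)‖ / (β₁ - β₂) ^ α)
        ≤ ENNReal.ofReal ((β₁ + β₂) ^ α * ‖f β₁ φ - f β₂ φ‖ / (β₁ - β₂) ^ α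
            + (β₁ + β₂) ^ α * ‖g β₁ φ - g β₂ φ‖ / (β₁ - β₂) ^ α) := by
          refine ENNReal.ofReal_le_ofReal ?_
          rw [← add_div, ← mul_add]
          have hnorm : ‖(f β₁ φ + g β₁ φ) - (f β₂ φ + g β₂ φ)‖ ≤
              ‖f β₁ φ - f β₂ φ‖ + ‖g β₁ φ - g β₂ φ‖ := by
            have heq : (f β₁ φ + g β₁ φ) - (f β₂ φ + g β₂ φ) =
                (f β₁ φ - f β₂ φ) + (g β₁ φ - g β₂ φ) := by ring
            rw [heq]; exact norm_add_le _ _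
          exact div_le_div_of_nonneg_right (mul_le_mul_of_nonneg_left hnorm hSα) hDα.le
      _ = ENNReal.ofReal ((β₁ + β₂) ^ α * ‖f β₁ φ - f β₂ φ‖ / (β₁ - β₂) ^ α)
            + ENNReal.ofReal ((β₁ + β₂) ^ α * ‖g β₁ φ - g β₂ φ‖ / (β₁ - β₂) ^ α) :=
          ENNReal.ofReal_add (div_nonneg (mul_nonneg hSα (norm_nonneg _)) hDα.le)
            (div_nonneg (mul_nonneg hSα (norm_nonneg _)) hDα.le)
      _ ≤ _ := add_le_add (le_holderSemi φ h0 h1 h2 h3) (le_holderSemi φ h0 h1 h2 h3)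
  calc CbNorm α (fun β φ => f β φ + g β φ) = _ + _ := rfl
    _ ≤ (wSupNorm (fun β => jap β ^ α) f + wSupNorm (fun β => jap β ^ α) g)
        + (holderSemi α f + holderSemi α g) := add_le_add hw hh
    _ = CbNorm α f + CbNorm α g := by unfold CbNorm; ring

/-- Submultiplicativity of CbNorm. -/
lemma CbNorm_mul {α : ℝ} (hα : 0 ≤ α) (f g : ℝ → ℝ → ℂ) :
    CbNorm α (fun β φ => f β φ * g β φ) ≤ CbNorm α f * CbNorm α g := by
  set Wf := wSupNorm (fun β => jap β ^ α) f with hWf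
  set Wg := wSupNorm (fun β => jap β ^ α) g with hWg
  set Hf := holderSemi α f with hHf
  set Hg := holderSemi α g with hHg
  have hw : wSupNorm (fun β => jap β ^ α) (fun β φ => f β φ * g β φ) ≤ Wf * Wg := by
    refine wSupNorm_le fun β hβ φ => ?_
    have hJ := one_le_japrpow hα β
    have hJnn : (0:ℝ) ≤ jap β ^ α := japrpow_nonneg α β
    have h1 : jap β ^ α * ‖f β φ * g β φ‖ ≤ (jap β ^ α * ‖f β φ‖) * (jap β ^ α * ‖g β φ‖) := by
      rw [norm_mul]
      calc jap β ^ α * (‖f β φ‖ * ‖g β φ‖) = (jap β ^ α * ‖f β φ‖) * ‖g β φ‖ := by ring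
        _ ≤ (jap β ^ α * ‖f β φ‖) * (jap β ^ α * ‖g β φ‖) :=
            mul_le_mul_of_nonneg_left (le_mul_of_one_le_left (norm_nonneg _) hJ)
              (mul_nonneg hJnn (norm_nonneg _))
    calc ENNReal.ofReal (jap β ^ α * ‖f β φ * g β φ‖)
        ≤ ENNReal.ofReal ((jap β ^ α * ‖f β φ‖) * (jap β ^ α * ‖g β φ‖)) :=
          ENNReal.ofReal_le_ofReal h1
      _ = ENNReal.ofReal (jap β ^ α * ‖f β φ‖) * ENNReal.ofReal (jap β ^ α * ‖g β φ‖) :=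
          ENNReal.ofReal_mul (mul_nonneg hJnn (norm_nonneg _))
      _ ≤ Wf * Wg := mul_le_mul' (le_wSupNorm hβ φ) (le_wSupNorm hβ φ)
  have hh : holderSemi α (fun β φ => f β φ * g β φ) ≤ Wf * Hg + Hf * Wg := by
    refine holderSemi_le fun φ β₁ β₂ h0 h1 h2 h3 => ?_
    have hb1 : (0:ℝ) < β₁ := h0.trans h1
    have hS : (0:ℝ) < β₁ + β₂ := by linarith
    have hD : (0:ℝ) < β₁ - β₂ := by linarith
    have hJ1 := one_le_japrpow hα β₁
    have hJ2 := one_le_japrpow hα β₂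
    have hJ1n : (0:ℝ) ≤ jap β₁ ^ α := japrpow_nonneg α β₁
    have hJ2n : (0:ℝ) ≤ jap β₂ ^ α := japrpow_nonneg α β₂
    have hSα : (0:ℝ) < (β₁+β₂)^α := Real.rpow_pos_of_pos hS α
    have hDα : (0:ℝ) < (β₁-β₂)^α := Real.rpow_pos_of_pos hD α
    have key : (β₁ + β₂) ^ α * ‖f β₁ φ * g β₁ φ - f β₂ φ * g β₂ φ‖ / (β₁ - β₂) ^ α ≤
        (jap β₁ ^ α * ‖f β₁ φ‖) * ((β₁ + β₂) ^ α * ‖g β₁ φ - g β₂ φ‖ / (β₁ - β₂) ^ α)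
        + ((β₁ + β₂) ^ α * ‖f β₁ φ - f β₂ φ‖ / (β₁ - β₂) ^ α) * (jap β₂ ^ α * ‖g β₂ φ‖) := by
      have hsplit : ‖f β₁ φ * g β₁ φ - f β₂ φ * g β₂ φ‖ ≤
          ‖f β₁ φ‖ * ‖g β₁ φ - g β₂ φ‖ + ‖f β₁ φ - f β₂ φ‖ * ‖g β₂ φ‖ := by
        have heq : f β₁ φ * g β₁ φ - f β₂ φ * g β₂ φ =
            f β₁ φ * (g β₁ φ - g β₂ φ) + (f β₁ φ - f β₂ φ) * g β₂ φ := by ring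
        rw [heq]
        exact (norm_add_le _ _).trans (by rw [norm_mul, norm_mul])
      rw [div_le_iff₀ hDα]
      have expand : ((jap β₁ ^ α * ‖f β₁ φ‖) * ((β₁ + β₂) ^ α * ‖g β₁ φ - g β₂ φ‖ / (β₁ - β₂) ^ α)
          + ((β₁ + β₂) ^ α * ‖f β₁ φ - f β₂ φ‖ / (β₁ - β₂) ^ α) * (jap β₂ ^ α * ‖g β₂ φ‖))
          * (β₁ - β₂) ^ α
          = (jap β₁ ^ α * ‖f β₁ φ‖) * ((β₁ + β₂) ^ α * ‖g β₁ φ - g β₂ φ‖)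
          + ((β₁ + β₂) ^ α * ‖f β₁ φ - f β₂ φ‖) * (jap β₂ ^ α * ‖g β₂ φ‖) := by
        field_simp
      rw [expand]
      have h1' : (β₁ + β₂) ^ α * ‖f β₁ φ * g β₁ φ - f β₂ φ * g β₂ φ‖ ≤
          (β₁ + β₂) ^ α * (‖f β₁ φ‖ * ‖g β₁ φ - g β₂ φ‖ + ‖f β₁ φ - f β₂ φ‖ * ‖g β₂ φ‖) :=
        mul_le_mul_of_nonneg_left hsplit hSα.le
      refine h1'.trans ?_
      have t1 : (β₁ + β₂) ^ α * (‖f β₁ φ‖ * ‖g β₁ φ - g β₂ φ‖) ≤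
          (jap β₁ ^ α * ‖f β₁ φ‖) * ((β₁ + β₂) ^ α * ‖g β₁ φ - g β₂ φ‖) := by
        calc (β₁ + β₂) ^ α * (‖f β₁ φ‖ * ‖g β₁ φ - g β₂ φ‖)
            = ‖f β₁ φ‖ * ((β₁ + β₂) ^ α * ‖g β₁ φ - g β₂ φ‖) := by ring
          _ ≤ (jap β₁ ^ α * ‖f β₁ φ‖) * ((β₁ + β₂) ^ α * ‖g β₁ φ - g β₂ φ‖) :=
              mul_le_mul_of_nonneg_right (le_mul_of_one_le_left (norm_nonneg _) hJ1)
                (mul_nonneg hSα.le (norm_nonneg _))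
      have t2 : (β₁ + β₂) ^ α * (‖f β₁ φ - f β₂ φ‖ * ‖g β₂ φ‖) ≤
          ((β₁ + β₂) ^ α * ‖f β₁ φ - f β₂ φ‖) * (jap β₂ ^ α * ‖g β₂ φ‖) := by
        calc (β₁ + β₂) ^ α * (‖f β₁ φ - f β₂ φ‖ * ‖g β₂ φ‖)
            = ((β₁ + β₂) ^ α * ‖f β₁ φ - f β₂ φ‖) * ‖g β₂ φ‖ := by ring
          _ ≤ ((β₁ + β₂) ^ α * ‖f β₁ φ - f β₂ φ‖) * (jap β₂ ^ α * ‖g β₂ φ‖) :=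
              mul_le_mul_of_nonneg_left (le_mul_of_one_le_left (norm_nonneg _) hJ2)
                (mul_nonneg hSα.le (norm_nonneg _))
      rw [mul_add]
      linarith
    calc ENNReal.ofReal ((β₁ + β₂) ^ α * ‖f β₁ φ * g β₁ φ - f β₂ φ * g β₂ φ‖ / (β₁ - β₂) ^ α)
        ≤ ENNReal.ofReal ((jap β₁ ^ α * ‖f β₁ φ‖) * ((β₁ + β₂) ^ α * ‖g β₁ φ - g β₂ φ‖ / (β₁ - β₂) ^ α))
          + ENNReal.ofReal (((β₁ + β₂) ^ α * ‖f β₁ φ - f β₂ φ‖ / (β₁ - β₂) ^ α) * (jap β₂ ^ α * ‖g β₂ φ‖)) := by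
          rw [← ENNReal.ofReal_add
            (mul_nonneg (mul_nonneg hJ1n (norm_nonneg _))
              (div_nonneg (mul_nonneg hSα.le (norm_nonneg _)) hDα.le))
            (mul_nonneg (div_nonneg (mul_nonneg hSα.le (norm_nonneg _)) hDα.le)
              (mul_nonneg hJ2n (norm_nonneg _)))]
          exact ENNReal.ofReal_le_ofReal key
      _ ≤ Wf * Hg + Hf * Wg := by
          refine add_le_add ?_ ?_
          · rw [ENNReal.ofReal_mul (mul_nonneg hJ1n (norm_nonneg _))]
            exact mul_le_mul' (le_wSupNorm hb1 φ) (le_holderSemi φ h0 h1 h2 h3)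
          · rw [ENNReal.ofReal_mul
              (div_nonneg (mul_nonneg hSα.le (norm_nonneg _)) hDα.le)]
            exact mul_le_mul' (le_holderSemi φ h0 h1 h2 h3) (le_wSupNorm h0 φ)
  calc CbNorm α (fun β φ => f β φ * g β φ) = _ + _ := rfl
    _ ≤ Wf * Wg + (Wf * Hg + Hf * Wg) := add_le_add hw hh
    _ ≤ (Wf + Hf) * (Wg + Hg) := by
        rw [add_mul, mul_add, mul_add]
        calc Wf * Wg + (Wf * Hg + Hf * Wg)
            = Wf * Wg + Wf * Hg + Hf * Wg := by ring
          _ ≤ Wf * Wg + Wf * Hg + (Hf * Wg + Hf * Hg) :=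
              add_le_add le_rfl le_self_add
          _ = _ := by ring
    _ = CbNorm α f * CbNorm α g := rfl


lemma cont_slice {f : ℝ → ℝ → ℂ} (hf : ContOn2 f) {β : ℝ} (hβ : 0 < β) :
    Continuous fun φ => f β φ := by
  rw [continuous_iff_continuousAt]
  intro φ
  have hopen : IsOpen (Set.Ioi (0:ℝ) ×ˢ (Set.univ : Set ℝ)) := isOpen_Ioi.prod isOpen_univ
  have hmem : (β, φ) ∈ Set.Ioi (0:ℝ) ×ˢ (Set.univ : Set ℝ) := ⟨hβ, trivial⟩
  have h1 : ContinuousAt (fun p : ℝ × ℝ => f p.1 p.2) (β, φ) :=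
    hf.continuousAt (hopen.mem_nhds hmem)
  exact h1.comp (Continuous.continuousAt (continuous_const.prodMk continuous_id))

lemma two_pi_pos : (0:ℝ) < 2 * Real.pi := by positivity

lemma smul_P0 (f : ℝ → ℝ → ℂ) (β : ℝ) :
    (2 * Real.pi : ℝ) • P0 f β = ∫ φ in (0:ℝ)..(2 * Real.pi), f β φ := by
  unfold P0
  rw [smul_smul, mul_one_div, div_self two_pi_pos.ne', one_smul]

/-- Averaging bound: the CbNorm of the mean is at most the CbNorm. -/
lemma CbNorm_P0 {α : ℝ} (hα : 0 ≤ α) (h : ℝ → ℝ → ℂ)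
    (hc : ∀ β, 0 < β → Continuous fun φ => h β φ) :
    CbNorm α (fun β _ => P0 h β) ≤ CbNorm α h := by
  by_cases htop : CbNorm α h = ⊤
  · rw [htop]; exact le_top
  have hWfin : wSupNorm (fun β => jap β ^ α) h ≠ ⊤ :=
    fun hW => htop (by unfold CbNorm; rw [hW]; simp)
  have hHfin : holderSemi α h ≠ ⊤ :=
    fun hH => htop (by unfold CbNorm; rw [hH]; simp)
  set M := (wSupNorm (fun β => jap β ^ α) h).toReal with hM
  set K := (holderSemi α h).toReal with hK
  have habs : |2 * Real.pi - 0| = 2 * Real.pi := by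
    rw [sub_zero, abs_of_pos two_pi_pos]
  refine add_le_add ?_ ?_
  · -- sup part
    refine wSupNorm_le fun β hβ φ => ?_
    have hJ : (0:ℝ) < jap β ^ α := japrpow_pos hα β
    have hb : ∀ φ' : ℝ, ‖h β φ'‖ ≤ M / (jap β ^ α) := by
      intro φ'
      have h1 : ENNReal.ofReal (jap β ^ α * ‖h β φ'‖) ≤ wSupNorm (fun β => jap β ^ α) h :=
        le_wSupNorm hβ φ'
      have h2 : jap β ^ α * ‖h β φ'‖ ≤ M :=
        (ENNReal.ofReal_le_iff_le_toReal hWfin).mp h1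
      rw [le_div_iff₀ hJ, mul_comm]; exact h2
    have hnorm : ‖∫ φ' in (0:ℝ)..(2 * Real.pi), h β φ'‖ ≤ M / (jap β ^ α) * (2 * Real.pi) := by
      have := intervalIntegral.norm_integral_le_of_norm_le_const
        (C := M / (jap β ^ α)) (f := fun φ' => h β φ')
        (a := 0) (b := 2 * Real.pi) (fun x _ => hb x)
      rwa [habs] at this
    have hP : ‖P0 h β‖ ≤ M / (jap β ^ α) := by
      unfold P0
      rw [norm_smul, Real.norm_eq_abs, abs_of_pos (by positivity : (0:ℝ) < 1 / (2 * Real.pi))]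
      calc 1 / (2 * Real.pi) * ‖∫ φ' in (0:ℝ)..(2 * Real.pi), h β φ'‖
          ≤ 1 / (2 * Real.pi) * (M / (jap β ^ α) * (2 * Real.pi)) :=
            mul_le_mul_of_nonneg_left hnorm (by positivity)
        _ = M / (jap β ^ α) := by field_simp
    have hfinal : jap β ^ α * ‖P0 h β‖ ≤ M := by
      calc jap β ^ α * ‖P0 h β‖ ≤ jap β ^ α * (M / (jap β ^ α)) :=
            mul_le_mul_of_nonneg_left hP hJ.le
        _ = M := mul_div_cancel₀ _ hJ.ne'
    calc ENNReal.ofReal (jap β ^ α * ‖P0 h β‖) ≤ ENNReal.ofReal M :=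
          ENNReal.ofReal_le_ofReal hfinal
      _ = wSupNorm (fun β => jap β ^ α) h := ENNReal.ofReal_toReal hWfin
  · -- Hölder part
    refine holderSemi_le fun φ β₁ β₂ h0 h1 h2 h3 => ?_
    have hb1 : (0:ℝ) < β₁ := h0.trans h1
    have hS : (0:ℝ) < β₁ + β₂ := by linarith
    have hD : (0:ℝ) < β₁ - β₂ := by linarith
    have hSα : (0:ℝ) < (β₁ + β₂) ^ α := Real.rpow_pos_of_pos hS α
    have hDα : (0:ℝ) < (β₁ - β₂) ^ α := Real.rpow_pos_of_pos hD α
    have hb : ∀ φ' : ℝ, ‖h β₁ φ' - h β₂ φ'‖ ≤ K * (β₁ - β₂) ^ α / (β₁ + β₂) ^ α := by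
      intro φ'
      have hle : ENNReal.ofReal ((β₁ + β₂) ^ α * ‖h β₁ φ' - h β₂ φ'‖ / (β₁ - β₂) ^ α) ≤
          holderSemi α h := le_holderSemi φ' h0 h1 h2 h3
      have h2' : (β₁ + β₂) ^ α * ‖h β₁ φ' - h β₂ φ'‖ / (β₁ - β₂) ^ α ≤ K :=
        (ENNReal.ofReal_le_iff_le_toReal hHfin).mp hle
      have h3' : (β₁ + β₂) ^ α * ‖h β₁ φ' - h β₂ φ'‖ ≤ K * (β₁ - β₂) ^ α := by
        rwa [div_le_iff₀ hDα] at h2'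
      rw [le_div_iff₀ hSα, mul_comm]; exact h3'
    have hdiff : P0 h β₁ - P0 h β₂ =
        (1 / (2 * Real.pi) : ℝ) • ∫ φ' in (0:ℝ)..(2 * Real.pi), (h β₁ φ' - h β₂ φ') := by
      unfold P0
      rw [intervalIntegral.integral_sub ((hc β₁ hb1).intervalIntegrable _ _)
        ((hc β₂ h0).intervalIntegrable _ _), smul_sub]
    have hnorm : ‖∫ φ' in (0:ℝ)..(2 * Real.pi), (h β₁ φ' - h β₂ φ')‖ ≤
        K * (β₁ - β₂) ^ α / (β₁ + β₂) ^ α * (2 * Real.pi) := by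
      have := intervalIntegral.norm_integral_le_of_norm_le_const
        (C := K * (β₁ - β₂) ^ α / (β₁ + β₂) ^ α) (f := fun φ' => h β₁ φ' - h β₂ φ')
        (a := 0) (b := 2 * Real.pi) (fun x _ => hb x)
      rwa [habs] at this
    have hP : ‖P0 h β₁ - P0 h β₂‖ ≤ K * (β₁ - β₂) ^ α / (β₁ + β₂) ^ α := by
      rw [hdiff, norm_smul, Real.norm_eq_abs,
        abs_of_pos (by positivity : (0:ℝ) < 1 / (2 * Real.pi))]
      calc 1 / (2 * Real.pi) * ‖∫ φ' in (0:ℝ)..(2 * Real.pi), (h β₁ φ' - h β₂ φ')‖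
          ≤ 1 / (2 * Real.pi) * (K * (β₁ - β₂) ^ α / (β₁ + β₂) ^ α * (2 * Real.pi)) :=
            mul_le_mul_of_nonneg_left hnorm (by positivity)
        _ = K * (β₁ - β₂) ^ α / (β₁ + β₂) ^ α := by field_simp
    have hfinal : (β₁ + β₂) ^ α * ‖P0 h β₁ - P0 h β₂‖ / (β₁ - β₂) ^ α ≤ K := by
      rw [div_le_iff₀ hDα]
      calc (β₁ + β₂) ^ α * ‖P0 h β₁ - P0 h β₂‖
          ≤ (β₁ + β₂) ^ α * (K * (β₁ - β₂) ^ α / (β₁ + β₂) ^ α) :=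
            mul_le_mul_of_nonneg_left hP hSα.le
        _ = K * (β₁ - β₂) ^ α := by field_simp
    calc ENNReal.ofReal ((β₁ + β₂) ^ α * ‖P0 h β₁ - P0 h β₂‖ / (β₁ - β₂) ^ α)
        ≤ ENNReal.ofReal K := ENNReal.ofReal_le_ofReal hfinal
      _ = holderSemi α h := ENNReal.ofReal_toReal hHfin

/-- Mean of a product decomposes. -/
lemma P0_mul_decomp (f₁ f₂ : ℝ → ℝ → ℂ) (β : ℝ)
    (h1 : Continuous fun φ => f₁ β φ) (h2 : Continuous fun φ => f₂ β φ) :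
    P0 (fun b p => f₁ b p * f₂ b p) β =
      P0 f₁ β * P0 f₂ β + P0 (fun b p => (f₁ b p - P0 f₁ b) * (f₂ b p - P0 f₂ b)) β := by
  set c₁ := P0 f₁ β with hc₁
  set c₂ := P0 f₂ β with hc₂
  have hq : Continuous fun φ => (f₁ β φ - c₁) * (f₂ β φ - c₂) :=
    (h1.sub continuous_const).mul (h2.sub continuous_const)
  have he : (fun φ => f₁ β φ * f₂ β φ) = fun φ =>
      ((f₁ β φ - c₁) * (f₂ β φ - c₂) + c₁ * f₂ β φ) + (f₁ β φ * c₂ - c₁ * c₂) := by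
    funext φ; ring
  have hint : (∫ φ in (0:ℝ)..(2 * Real.pi), f₁ β φ * f₂ β φ) =
      (∫ φ in (0:ℝ)..(2 * Real.pi), (f₁ β φ - c₁) * (f₂ β φ - c₂))
      + (2 * Real.pi : ℝ) • (c₁ * c₂) := by
    calc (∫ φ in (0:ℝ)..(2 * Real.pi), f₁ β φ * f₂ β φ)
        = ∫ φ in (0:ℝ)..(2 * Real.pi),
            (((f₁ β φ - c₁) * (f₂ β φ - c₂) + c₁ * f₂ β φ) + (f₁ β φ * c₂ - c₁ * c₂)) := by
          rw [← he]
      _ = ((∫ φ in (0:ℝ)..(2 * Real.pi), (f₁ β φ - c₁) * (f₂ β φ - c₂))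
            + ∫ φ in (0:ℝ)..(2 * Real.pi), c₁ * f₂ β φ)
          + ((∫ φ in (0:ℝ)..(2 * Real.pi), f₁ β φ * c₂)
            - ∫ φ in (0:ℝ)..(2 * Real.pi), (c₁ * c₂ : ℂ)) := by
          rw [intervalIntegral.integral_add
              (f := fun φ => (f₁ β φ - c₁) * (f₂ β φ - c₂) + c₁ * f₂ β φ)
              (g := fun φ => f₁ β φ * c₂ - c₁ * c₂)
              ((hq.intervalIntegrable _ _).add
                ((continuous_const.mul h2 : Continuous fun φ => c₁ * f₂ β φ).intervalIntegrable _ _))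
              (((h1.mul continuous_const : Continuous fun φ => f₁ β φ * c₂).intervalIntegrable _ _).sub
                (continuous_const.intervalIntegrable _ _)),
            intervalIntegral.integral_add (f := fun φ => (f₁ β φ - c₁) * (f₂ β φ - c₂))
              (g := fun φ => c₁ * f₂ β φ) (hq.intervalIntegrable _ _)
              ((continuous_const.mul h2 : Continuous fun φ => c₁ * f₂ β φ).intervalIntegrable _ _),
            intervalIntegral.integral_sub (f := fun φ => f₁ β φ * c₂) (g := fun _ => c₁ * c₂)
              ((h1.mul continuous_const : Continuous fun φ => f₁ β φ * c₂).intervalIntegrable _ _)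
              (continuous_const.intervalIntegrable _ _)]
      _ = ((∫ φ in (0:ℝ)..(2 * Real.pi), (f₁ β φ - c₁) * (f₂ β φ - c₂))
            + c₁ * ((2 * Real.pi : ℝ) • c₂))
          + (((2 * Real.pi : ℝ) • c₁) * c₂ - (2 * Real.pi - 0 : ℝ) • (c₁ * c₂)) := by
          rw [intervalIntegral.integral_const_mul, intervalIntegral.integral_mul_const,
            intervalIntegral.integral_const, smul_P0, smul_P0]
      _ = (∫ φ in (0:ℝ)..(2 * Real.pi), (f₁ β φ - c₁) * (f₂ β φ - c₂))
          + (2 * Real.pi : ℝ) • (c₁ * c₂) := by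
          rw [mul_smul_comm, smul_mul_assoc, sub_zero]
          abel
  have hP0p : P0 (fun b p => f₁ b p * f₂ b p) β =
      (1 / (2 * Real.pi) : ℝ) • ∫ φ in (0:ℝ)..(2 * Real.pi), f₁ β φ * f₂ β φ := rfl
  have hP0q : P0 (fun b p => (f₁ b p - P0 f₁ b) * (f₂ b p - P0 f₂ b)) β =
      (1 / (2 * Real.pi) : ℝ) • ∫ φ in (0:ℝ)..(2 * Real.pi), (f₁ β φ - c₁) * (f₂ β φ - c₂) :=
    rfl
  rw [hP0p, hP0q, hint, smul_add, smul_smul, one_div_mul_cancel two_pi_pos.ne', one_smul,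
    add_comm]


lemma CbNorm_neg {α : ℝ} (g : ℝ → ℝ → ℂ) :
    CbNorm α (fun β φ => - g β φ) = CbNorm α g := by
  unfold CbNorm wSupNorm holderSemi
  congr 1
  · simp only [norm_neg]
  · simp only [neg_sub_neg]
    congr 1; funext φ; congr 1; funext β₁; congr 1; funext β₂
    simp only [norm_sub_rev (g β₂ φ) (g β₁ φ)]

lemma CbNorm_sub {α : ℝ} (f g : ℝ → ℝ → ℂ) :
    CbNorm α (fun β φ => f β φ - g β φ) ≤ CbNorm α f + CbNorm α g := by
  have he : (fun β φ => f β φ - g β φ) = fun β φ => f β φ + - g β φ := by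
    funext β φ; ring
  rw [he]
  exact (CbNorm_add f (fun β φ => - g β φ)).trans
    (by rw [CbNorm_neg])

theorem statement6 (α : ℝ) (hα : α ∈ Set.Ioo (0:ℝ) 1) :
    ∃ C > (0:ℝ), ∀ m : ℕ, 0 < m → ∀ f₁ f₂ : ℝ → ℝ → ℂ,
      ContOn2 f₁ → ContOn2 f₂ →
      (∀ β φ : ℝ, f₁ β (φ + 2 * Real.pi / m) = f₁ β φ) →
      (∀ β φ : ℝ, f₂ β (φ + 2 * Real.pi / m) = f₂ β φ) →
      CbNorm α f₁ < ⊤ → CbNorm α f₂ < ⊤ →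
      CbNorm α (fun β _ => P0 (fun b p => f₁ b p * f₂ b p) β) +
          ENNReal.ofReal (Real.sqrt m) *
            CbNorm α (fun β φ => f₁ β φ * f₂ β φ - P0 (fun b p => f₁ b p * f₂ b p) β) ≤
        ENNReal.ofReal C *
          (CbNorm α (fun β _ => P0 f₁ β) +
            ENNReal.ofReal (Real.sqrt m) * CbNorm α (fun β φ => f₁ β φ - P0 f₁ β)) *
          (CbNorm α (fun β _ => P0 f₂ β) +
            ENNReal.ofReal (Real.sqrt m) * CbNorm α (fun β φ => f₂ β φ - P0 f₂ β)) := by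
  refine ⟨3, by norm_num, ?_⟩
  intro m hm f₁ f₂ hcf₁ hcf₂ _ _ _ _
  have hα0 : (0:ℝ) ≤ α := hα.1.le
  have h1m : (1:ℕ) ≤ m := hm
  set g₁ : ℝ → ℝ → ℂ := fun β φ => f₁ β φ - P0 f₁ β with hg₁
  set g₂ : ℝ → ℝ → ℂ := fun β φ => f₂ β φ - P0 f₂ β with hg₂
  set qf : ℝ → ℝ → ℂ := fun β φ => g₁ β φ * g₂ β φ with hqf
  set s : ℝ≥0∞ := ENNReal.ofReal (Real.sqrt m) with hs
  set A₁ := CbNorm α (fun β (_ : ℝ) => P0 f₁ β) with hA₁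
  set A₂ := CbNorm α (fun β (_ : ℝ) => P0 f₂ β) with hA₂
  set B₁ := CbNorm α g₁ with hB₁
  set B₂ := CbNorm α g₂ with hB₂
  have hs₁ : ∀ β, 0 < β → Continuous fun φ => f₁ β φ := fun β hβ => cont_slice hcf₁ hβ
  have hs₂ : ∀ β, 0 < β → Continuous fun φ => f₂ β φ := fun β hβ => cont_slice hcf₂ hβ
  have hsq : ∀ β, 0 < β → Continuous fun φ => qf β φ := fun β hβ =>
    ((hs₁ β hβ).sub continuous_const).mul ((hs₂ β hβ).sub continuous_const)
  have hdec : ∀ β, 0 < β →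
      P0 (fun b p => f₁ b p * f₂ b p) β = P0 f₁ β * P0 f₂ β + P0 qf β := fun β hβ =>
    P0_mul_decomp f₁ f₂ β (hs₁ β hβ) (hs₂ β hβ)
  have hQ : CbNorm α qf ≤ B₁ * B₂ := CbNorm_mul hα0 g₁ g₂
  have hT1 : CbNorm α (fun β (_ : ℝ) => P0 (fun b p => f₁ b p * f₂ b p) β) ≤
      A₁ * A₂ + B₁ * B₂ := by
    have hcongr : CbNorm α (fun β (_ : ℝ) => P0 (fun b p => f₁ b p * f₂ b p) β) =
        CbNorm α (fun β (_ : ℝ) => P0 f₁ β * P0 f₂ β + P0 qf β) :=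
      CbNorm_congr fun β hβ φ => by rw [hdec β hβ]
    rw [hcongr]
    exact (CbNorm_add (fun β (_ : ℝ) => P0 f₁ β * P0 f₂ β) (fun β (_ : ℝ) => P0 qf β)).trans
      (add_le_add (CbNorm_mul hα0 (fun β (_ : ℝ) => P0 f₁ β) (fun β (_ : ℝ) => P0 f₂ β))
        ((CbNorm_P0 hα0 qf hsq).trans hQ))
  have hT2 : CbNorm α (fun β φ => f₁ β φ * f₂ β φ - P0 (fun b p => f₁ b p * f₂ b p) β) ≤
      A₁ * B₂ + (B₁ * A₂ + (B₁ * B₂ + B₁ * B₂)) := by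
    have hcongr : CbNorm α (fun β φ => f₁ β φ * f₂ β φ - P0 (fun b p => f₁ b p * f₂ b p) β) =
        CbNorm α (fun β φ => P0 f₁ β * g₂ β φ + (g₁ β φ * P0 f₂ β + (qf β φ - P0 qf β))) :=
      CbNorm_congr fun β hβ φ => by
        rw [hdec β hβ]
        simp only [hqf, hg₁, hg₂]
        ring
    rw [hcongr]
    refine (CbNorm_add (fun β φ => P0 f₁ β * g₂ β φ)
        (fun β φ => g₁ β φ * P0 f₂ β + (qf β φ - P0 qf β))).trans
      (add_le_add ?_ ((CbNorm_add (fun β φ => g₁ β φ * P0 f₂ β)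
        (fun β φ => qf β φ - P0 qf β)).trans (add_le_add ?_ ?_)))
    · exact CbNorm_mul hα0 (fun β (_ : ℝ) => P0 f₁ β) g₂
    · exact CbNorm_mul hα0 g₁ (fun β (_ : ℝ) => P0 f₂ β)
    · exact (CbNorm_sub qf (fun β (_ : ℝ) => P0 qf β)).trans
        (add_le_add hQ ((CbNorm_P0 hα0 qf hsq).trans hQ))
  have h1s : (1:ℝ≥0∞) ≤ s := by
    rw [hs, show (1:ℝ≥0∞) = ENNReal.ofReal 1 by simp]
    refine ENNReal.ofReal_le_ofReal ?_
    rw [Real.one_le_sqrt]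
    exact_mod_cast h1m
  set Z : ℝ≥0∞ := A₁ * A₂ + s * (A₁ * B₂) + s * (B₁ * A₂) + s * (s * (B₁ * B₂)) with hZ
  have hBB : B₁ * B₂ ≤ s * (s * (B₁ * B₂)) := by
    calc B₁ * B₂ = 1 * (1 * (B₁ * B₂)) := by ring
      _ ≤ s * (s * (B₁ * B₂)) := mul_le_mul' h1s (mul_le_mul' h1s le_rfl)
  have hsBB : s * (B₁ * B₂) ≤ s * (s * (B₁ * B₂)) := by
    refine mul_le_mul' le_rfl ?_
    calc B₁ * B₂ = 1 * (B₁ * B₂) := (one_mul _).symm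
      _ ≤ s * (B₁ * B₂) := mul_le_mul' h1s le_rfl
  have hZ1 : A₁ * A₂ + B₁ * B₂ ≤ Z := by
    calc A₁ * A₂ + B₁ * B₂ ≤ A₁ * A₂ + s * (s * (B₁ * B₂)) := add_le_add le_rfl hBB
      _ ≤ Z := by
          rw [show Z = (A₁ * A₂ + s * (s * (B₁ * B₂))) + (s * (A₁ * B₂) + s * (B₁ * A₂)) from by
            rw [hZ]; ring]
          exact le_self_add
  have hZ2 : s * (A₁ * B₂ + (B₁ * A₂ + (B₁ * B₂ + B₁ * B₂))) ≤ Z + Z := by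
    calc s * (A₁ * B₂ + (B₁ * A₂ + (B₁ * B₂ + B₁ * B₂)))
        = s * (A₁ * B₂) + (s * (B₁ * A₂) + (s * (B₁ * B₂) + s * (B₁ * B₂))) := by ring
      _ ≤ s * (A₁ * B₂) + (s * (B₁ * A₂) + (s * (s * (B₁ * B₂)) + s * (s * (B₁ * B₂)))) :=
          add_le_add le_rfl (add_le_add le_rfl (add_le_add hsBB hsBB))
      _ ≤ Z + Z := by
          rw [show Z + Z = (s * (A₁ * B₂) + (s * (B₁ * A₂)
              + (s * (s * (B₁ * B₂)) + s * (s * (B₁ * B₂)))))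
              + (A₁ * A₂ + A₁ * A₂ + s * (A₁ * B₂) + s * (B₁ * A₂)) from by rw [hZ]; ring]
          exact le_self_add
  calc CbNorm α (fun β (_ : ℝ) => P0 (fun b p => f₁ b p * f₂ b p) β) +
        s * CbNorm α (fun β φ => f₁ β φ * f₂ β φ - P0 (fun b p => f₁ b p * f₂ b p) β)
      ≤ (A₁ * A₂ + B₁ * B₂) + s * (A₁ * B₂ + (B₁ * A₂ + (B₁ * B₂ + B₁ * B₂))) :=
        add_le_add hT1 (mul_le_mul' le_rfl hT2)
    _ ≤ Z + (Z + Z) := add_le_add hZ1 hZ2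
    _ = ENNReal.ofReal 3 * (A₁ + s * B₁) * (A₂ + s * B₂) := by
        rw [hZ, show ENNReal.ofReal (3:ℝ) = (3:ℝ≥0∞) from by norm_num]
        ring
end

section
/- There exists an absolute constant C > 0 such that for every m ∈ ℕ₊ and every m-fold symmetric f ∈ L¹(𝕋) with ∫_𝕋 f(φ) dφ = 0, there exists a continuous m-fold symmetric g : 𝕋 → ℂ with ∫_𝕋 g(φ) dφ = 0, g' = f in the sense of distributions on 𝕋, and ‖g‖_{L^∞(𝕋)} ≤ (C/m)·‖f‖_{L¹(𝕋)}. -/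
open MeasureTheory Filter Set

open scoped Interval

/-! With `T = 2π/m`, the vanishing mean of `f` over `[0, 2π] = m` periods gives `∫₀ᵀ f = 0`, so the
primitive `F x = ∫₀ˣ f` is `T`-periodic, and `g = F - ⨍₀ᵀ F` has mean zero. Two values of `F` on
one period differ by at most `∫₀ᵀ ‖f‖ = ‖f‖₁ / m`, hence so do `F x` and its average: `C = 1`. -/

section

variable {E : Type*} [NormedAddCommGroup E] [NormedSpace ℝ E]

theorem norm_intervalIntegral_le_of_mem_Icc {f : ℝ → E} {a b u v : ℝ}
    (hf : IntervalIntegrable f volume a b) (hu : u ∈ Icc a b) (hv : v ∈ Icc a b) :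
    ‖∫ t in u..v, f t‖ ≤ ∫ t in a..b, ‖f t‖ := by
  have hab : a ≤ b := hu.1.trans hu.2
  have hsub : Ι u v ⊆ Ioc a b := Ioc_subset_Ioc (le_min hu.1 hv.1) (max_le hu.2 hv.2)
  calc ‖∫ t in u..v, f t‖ ≤ ∫ t in Ι u v, ‖f t‖ :=
        intervalIntegral.norm_integral_le_integral_norm_uIoc
    _ ≤ ∫ t in Ioc a b, ‖f t‖ :=
      setIntegral_mono_set hf.norm.1 (Eventually.of_forall fun _ => norm_nonneg _)
        hsub.eventuallyLE
    _ = ∫ t in a..b, ‖f t‖ := (intervalIntegral.integral_of_le hab).symm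

theorem norm_sub_intervalAverage_le [CompleteSpace E] {F : ℝ → E} {a b I : ℝ} (hab : a < b)
    (hF : IntervalIntegrable F volume a b) {c : E} (h : ∀ y ∈ Icc a b, ‖c - F y‖ ≤ I) :
    ‖c - ⨍ y in a..b, F y‖ ≤ I := by
  have hba : 0 < b - a := sub_pos.2 hab
  have hc : c - ⨍ y in a..b, F y = (b - a)⁻¹ • ∫ y in a..b, (c - F y) := by
    rw [interval_average_eq, intervalIntegral.integral_sub intervalIntegrable_const hF,
      intervalIntegral.integral_const, smul_sub, inv_smul_smul₀ hba.ne']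
  have hbound : ‖∫ y in a..b, (c - F y)‖ ≤ I * (b - a) := by
    simpa only [abs_of_pos hba] using intervalIntegral.norm_integral_le_of_norm_le_const
      fun y hy => h y (Ioc_subset_Icc_self (uIoc_of_le hab.le ▸ hy))
  rw [hc, norm_smul, Real.norm_of_nonneg (inv_nonneg.2 hba.le)]
  calc (b - a)⁻¹ * ‖∫ y in a..b, (c - F y)‖ ≤ (b - a)⁻¹ * (I * (b - a)) := by gcongr
    _ = I := by field_simp

namespace Function.Periodic

variable {f : ℝ → E} {T : ℝ}

theorem intervalIntegral_zsmul_eq (hf : Periodic f T)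
    (hint : ∀ a b, IntervalIntegrable f volume a b) (n : ℤ) :
    ∫ x in 0..n • T, f x = n • ∫ x in 0..T, f x := by
  simpa only [zero_add] using hf.intervalIntegral_add_zsmul_eq n 0 hint

theorem primitive_of_intervalIntegral_eq_zero (hf : Periodic f T)
    (hint : ∀ a b, IntervalIntegrable f volume a b)
    (h0 : ∫ x in 0..T, f x = 0) : Periodic (fun x => ∫ t in 0..x, f t) T := fun x => by
  dsimp only
  rw [← intervalIntegral.integral_add_adjacent_intervals (hint 0 x) (hint x (x + T)),
    hf.intervalIntegral_add_eq x 0, zero_add, h0, add_zero]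

theorem intervalIntegral_sub_intervalAverage_eq_zero [CompleteSpace E] {F : ℝ → E}
    (hF : Periodic F T) (hT : T ≠ 0) (hint : ∀ a b, IntervalIntegrable F volume a b) (n : ℤ) :
    ∫ x in 0..n • T, (F x - ⨍ y in 0..T, F y) = 0 := by
  rw [intervalIntegral.integral_sub (hint _ _) intervalIntegrable_const,
    hF.intervalIntegral_zsmul_eq hint, intervalIntegral.integral_const, interval_average_eq,
    sub_zero, sub_zero, smul_smul, zsmul_eq_mul, mul_inv_cancel_right₀ hT,
    Int.cast_smul_eq_zsmul, sub_self]

theorem norm_primitive_sub_intervalAverage_le [CompleteSpace E] (hf : Periodic f T) (hT : 0 < T)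
    (hint : ∀ a b, IntervalIntegrable f volume a b) (h0 : ∫ x in 0..T, f x = 0) (x : ℝ) :
    ‖(∫ t in 0..x, f t) - ⨍ y in 0..T, ∫ t in 0..y, f t‖ ≤ ∫ t in 0..T, ‖f t‖ := by
  obtain ⟨x', hx', hxx'⟩ :=
    (hf.primitive_of_intervalIntegral_eq_zero hint h0).exists_mem_Ico₀ hT x
  rw [hxx']
  refine norm_sub_intervalAverage_le hT
    ((intervalIntegral.continuous_primitive hint 0).intervalIntegrable _ _) fun y hy => ?_
  rw [intervalIntegral.integral_interval_sub_left (hint 0 x') (hint 0 y)]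
  exact norm_intervalIntegral_le_of_mem_Icc (hint 0 T) hy (Ico_subset_Icc_self hx')

end Function.Periodic

end

theorem statement7 :
    ∃ C > (0:ℝ), ∀ m : ℕ, 0 < m → ∀ f : ℝ → ℂ,
      (∀ x : ℝ, f (x + 2 * Real.pi / m) = f x) →
      (∀ a b : ℝ, IntervalIntegrable f MeasureTheory.volume a b) →
      (∫ x in (0:ℝ)..(2 * Real.pi), f x) = 0 →
      ∃ g : ℝ → ℂ, Continuous g ∧
        (∀ x : ℝ, g (x + 2 * Real.pi / m) = g x) ∧
        (∫ x in (0:ℝ)..(2 * Real.pi), g x) = 0 ∧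
        (∀ x : ℝ, g x - g 0 = ∫ t in (0:ℝ)..x, f t) ∧
        (∀ x : ℝ, ‖g x‖ ≤ (C / m) * ∫ t in (0:ℝ)..(2 * Real.pi), ‖f t‖) := by
  refine ⟨1, one_pos, fun m hm f hf hint hmean => ?_⟩
  set T := 2 * Real.pi / m
  replace hf : Function.Periodic f T := hf
  have hT : 0 < T := by positivity
  have hmT : (m : ℤ) • T = 2 * Real.pi := by
    rw [zsmul_eq_mul, Int.cast_natCast]; simp only [T]; field_simp
  have hm0 : (m : ℤ) ≠ 0 := by exact_mod_cast hm.ne'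
  have hf0 : ∫ x in 0..T, f x = 0 := by
    rwa [← hmT, hf.intervalIntegral_zsmul_eq hint, smul_eq_zero,
      or_iff_right hm0] at hmean
  set F := fun x => ∫ t in 0..x, f t
  have hFper : Function.Periodic F T :=
    hf.primitive_of_intervalIntegral_eq_zero hint hf0
  have hFcont : Continuous F := intervalIntegral.continuous_primitive hint 0
  have hnorm : ∫ t in 0..2 * Real.pi, ‖f t‖ = m * ∫ t in 0..T, ‖f t‖ := by
    rw [← hmT, Function.Periodic.intervalIntegral_zsmul_eq (fun x => by simp only [hf x])
      fun a b => (hint a b).norm, zsmul_eq_mul, Int.cast_natCast]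
  refine ⟨fun x => F x - ⨍ y in 0..T, F y, by fun_prop, fun x => by simp only [hFper x], ?_,
    fun x => by simp [F], fun x => ?_⟩
  · rw [← hmT]
    exact hFper.intervalIntegral_sub_intervalAverage_eq_zero hT.ne'
      (fun a b => hFcont.intervalIntegrable a b) m
  · rw [hnorm, one_div, inv_mul_cancel_left₀ (by positivity)]
    exact hf.norm_primitive_sub_intervalAverage_le hT hint hf0 x
end

section
/- Let α ∈ (0,1). There exists C = C(α) > 0 such that for every F : (0,∞) × 𝕋 → ℂ which is continuous with continuous partial derivative ∂_βF and with M := ‖⟨β⟩^{α−1}F‖_{L^∞} + ‖⟨β⟩^{α}β∂_βF‖_{L^∞} < ∞, there exist a continuous function f : 𝕋 → ℂ and a function F₁ ∈ C_β^α such that F(β,φ) = F₁(β,φ) + f(φ) for all (β,φ), and ‖F₁‖_{C_β^α} + ‖f‖_{L^∞(𝕋)} ≤ C·M. -/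
open MeasureTheory Filter Set
open scoped ENNReal

lemma le_jap {β : ℝ} (h : 0 ≤ β) : β ≤ jap β := by
  rw [jap, Real.le_sqrt h (by positivity)]
  nlinarith

lemma jap_mono {a b : ℝ} (h : a ≤ b) (ha : 0 ≤ a) : jap a ≤ jap b := by
  rw [jap, jap]
  exact Real.sqrt_le_sqrt (by nlinarith)

lemma jap_le_two {β : ℝ} (h0 : 0 ≤ β) (h : β ≤ 1) : jap β ≤ 2 := by
  rw [jap, show (2:ℝ) = Real.sqrt 4 by rw [show (4:ℝ) = 2^2 by norm_num, Real.sqrt_sq]; norm_num]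
  exact Real.sqrt_le_sqrt (by nlinarith)

lemma jap_le_two_mul {β : ℝ} (h : 1 ≤ β) : jap β ≤ 2 * β := by
  rw [jap, show 2*β = Real.sqrt ((2*β)^2) by rw [Real.sqrt_sq (by linarith)]]
  exact Real.sqrt_le_sqrt (by nlinarith)

theorem statement10 (α : ℝ) (hα : α ∈ Set.Ioo (0:ℝ) 1) :
    ∃ C > (0:ℝ), ∀ (F Fβ : ℝ → ℝ → ℂ) (M₁ M₂ : ℝ),
      ContOn2 F → ContOn2 Fβ → Periodic2 F →
      (∀ β φ : ℝ, 0 < β → HasDerivAt (fun b => F b φ) (Fβ β φ) β) →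
      (∀ β φ : ℝ, 0 < β → jap β ^ (α - 1) * ‖F β φ‖ ≤ M₁) →
      (∀ β φ : ℝ, 0 < β → jap β ^ α * (β * ‖Fβ β φ‖) ≤ M₂) →
      ∃ (F₁ : ℝ → ℝ → ℂ) (f : ℝ → ℂ),
        Continuous f ∧ (∀ φ : ℝ, f (φ + 2 * Real.pi) = f φ) ∧
        (∀ β φ : ℝ, 0 < β → F β φ = F₁ β φ + f φ) ∧
        CbNorm α F₁ ≤ ENNReal.ofReal (C * (M₁ + M₂)) ∧
        (∀ φ : ℝ, ‖f φ‖ ≤ C * (M₁ + M₂)) := by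
  obtain ⟨hα0, hα1⟩ := hα
  refine ⟨11 + 2/α, by positivity, ?_⟩
  intro F Fβ M₁ M₂ hF hFβ hper hderiv hM1 hM2
  set M := M₁ + M₂ with hMdef
  have hM₁0 : 0 ≤ M₁ :=
    le_trans (mul_nonneg (Real.rpow_pos_of_pos (jap_pos 1) (α-1)).le (norm_nonneg _))
      (hM1 1 0 one_pos)
  have hM₂0 : 0 ≤ M₂ :=
    le_trans (mul_nonneg (Real.rpow_pos_of_pos (jap_pos 1) α).le
      (mul_nonneg one_pos.le (norm_nonneg _))) (hM2 1 0 one_pos)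
  have hM0 : 0 ≤ M := by positivity
  -- pointwise bounds
  have hFb : ∀ (b φ : ℝ), 0 < b → ‖Fβ b φ‖ ≤ M₂ / (b * jap b ^ α) := by
    intro b φ hb
    have hj : (0:ℝ) < jap b ^ α := Real.rpow_pos_of_pos (jap_pos b) α
    rw [le_div_iff₀ (mul_pos hb hj)]
    calc ‖Fβ b φ‖ * (b * jap b ^ α) = jap b ^ α * (b * ‖Fβ b φ‖) := by ring
    _ ≤ M₂ := hM2 b φ hb
  have hFb' : ∀ (b φ : ℝ), 0 < b → ‖Fβ b φ‖ ≤ M₂ * b ^ (-(1+α)) := by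
    intro b φ hb
    have h1 : b ^ (1+α) ≤ b * jap b ^ α := by
      rw [Real.rpow_add hb, Real.rpow_one]
      exact mul_le_mul_of_nonneg_left
        (Real.rpow_le_rpow hb.le (le_jap hb.le) hα0.le) hb.le
    have h2 : (0:ℝ) < b ^ (1+α) := Real.rpow_pos_of_pos hb _
    calc ‖Fβ b φ‖ ≤ M₂ / (b * jap b ^ α) := hFb b φ hb
    _ ≤ M₂ / b ^ (1+α) := div_le_div_of_nonneg_left hM₂0 h2 h1
    _ = M₂ * b ^ (-(1+α)) := by rw [Real.rpow_neg hb.le, div_eq_mul_inv]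
  have hdom : ∀ c : ℝ, 0 < c →
      IntegrableOn (fun b : ℝ => M₂ * b ^ (-(1+α))) (Ioi c) := by
    intro c hc
    exact (integrableOn_Ioi_rpow_of_lt (by linarith) hc).const_mul M₂
  have hcontb : ∀ φ : ℝ, ContinuousOn (fun b => Fβ b φ) (Ioi 0) := by
    intro φ
    exact hFβ.comp ((continuous_id.prodMk continuous_const).continuousOn)
      (fun b hb => Set.mk_mem_prod hb (mem_univ _))
  have hmeas : ∀ (φ c : ℝ), 0 < c →
      AEStronglyMeasurable (fun b => Fβ b φ) (volume.restrict (Ioi c)) := by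
    intro φ c hc
    exact ((hcontb φ).mono (Ioi_subset_Ioi hc.le)).aestronglyMeasurable measurableSet_Ioi
  have hInt : ∀ (φ c : ℝ), 0 < c → IntegrableOn (fun b => Fβ b φ) (Ioi c) := by
    intro φ c hc
    refine Integrable.mono' (hdom c hc) (hmeas φ c hc) ?_
    rw [ae_restrict_iff' measurableSet_Ioi]
    exact ae_of_all _ fun b hb => hFb' b φ (hc.trans hb)
  have htail_eq : ∀ c : ℝ, 0 < c →
      (∫ b in Ioi c, M₂ * b ^ (-(1+α))) = M₂ * (c ^ (-α) / α) := by
    intro c hc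
    rw [integral_const_mul, integral_Ioi_rpow_of_lt (by linarith) hc]
    rw [show -(1+α) + 1 = -α by ring]
    field_simp
  have htail : ∀ (c φ : ℝ), 0 < c → ‖∫ b in Ioi c, Fβ b φ‖ ≤ M₂ * (c ^ (-α) / α) := by
    intro c φ hc
    rw [← htail_eq c hc]
    refine norm_integral_le_of_norm_le (hdom c hc) ?_
    rw [ae_restrict_iff' measurableSet_Ioi]
    exact ae_of_all _ fun b hb => hFb' b φ (hc.trans hb)
  have hFTC : ∀ (φ a b : ℝ), 0 < a → a ≤ b →
      F b φ - F a φ = ∫ x in a..b, Fβ x φ := by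
    intro φ a b ha hab
    have hsub : Set.uIcc a b ⊆ Ioi 0 := by
      rw [uIcc_of_le hab]
      exact fun x hx => ha.trans_le hx.1
    refine (intervalIntegral.integral_eq_sub_of_hasDerivAt
      (fun x hx => hderiv x φ (hsub hx)) ?_).symm
    exact ((hcontb φ).mono hsub).intervalIntegrable
  have hsplit : ∀ (φ a b : ℝ), 0 < a → a ≤ b →
      (∫ x in Ioi a, Fβ x φ) = (∫ x in a..b, Fβ x φ) + ∫ x in Ioi b, Fβ x φ := by
    intro φ a b ha hab
    rw [intervalIntegral.integral_of_le hab,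
      ← setIntegral_union (Set.Ioc_disjoint_Ioi le_rfl) measurableSet_Ioi
        ((hInt φ a ha).mono_set Set.Ioc_subset_Ioi_self) (hInt φ b (ha.trans_le hab)),
      Set.Ioc_union_Ioi_eq_Ioi hab]
  set f : ℝ → ℂ := fun φ => F 1 φ + ∫ b in Ioi 1, Fβ b φ with hfdef
  set F₁ : ℝ → ℝ → ℂ := fun β φ => F β φ - f φ with hF₁def
  have key : ∀ (β φ : ℝ), 0 < β → F₁ β φ = -∫ b in Ioi β, Fβ b φ := by
    intro β φ hβ
    rcases le_total 1 β with h | h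
    · have e1 := hFTC φ 1 β one_pos h
      have e2 := hsplit φ 1 β one_pos h
      simp only [hF₁def, hfdef]
      rw [e2]
      linear_combination e1
    · have e1 := hFTC φ β 1 hβ h
      have e2 := hsplit φ β 1 hβ h
      simp only [hF₁def, hfdef]
      rw [e2]
      linear_combination -e1
  have htail1 : ∀ (β φ : ℝ), 0 < β → ‖F₁ β φ‖ ≤ M₂ * (β ^ (-α) / α) := by
    intro β φ hβ
    rw [key β φ hβ, norm_neg]
    exact htail β φ hβ
  have hFbound : ∀ (β φ : ℝ), 0 < β → ‖F β φ‖ ≤ M₁ * jap β ^ (1 - α) := by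
    intro β φ hβ
    have h := hM1 β φ hβ
    have hj : (0:ℝ) < jap β ^ (α - 1) := Real.rpow_pos_of_pos (jap_pos β) _
    have hinv : jap β ^ (1-α) = (jap β ^ (α-1))⁻¹ := by
      rw [← Real.rpow_neg (jap_pos β).le]
      norm_num
    rw [hinv, ← div_eq_mul_inv, le_div_iff₀ hj]
    calc ‖F β φ‖ * jap β ^ (α-1) = jap β ^ (α-1) * ‖F β φ‖ := by ring
    _ ≤ M₁ := h
  have hjap1 : jap (1:ℝ) ^ (1 - α) ≤ 2 := by
    calc jap (1:ℝ) ^ (1-α) ≤ jap 1 ^ (1:ℝ) :=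
      Real.rpow_le_rpow_of_exponent_le (one_le_jap 1) (by linarith)
    _ = jap 1 := Real.rpow_one _
    _ ≤ 2 := jap_le_two zero_le_one le_rfl
  have hfbound : ∀ φ : ℝ, ‖f φ‖ ≤ 2*M₁ + M₂/α := by
    intro φ
    calc ‖f φ‖ ≤ ‖F 1 φ‖ + ‖∫ b in Ioi 1, Fβ b φ‖ := norm_add_le _ _
    _ ≤ M₁ * jap 1 ^ (1-α) + M₂ * ((1:ℝ) ^ (-α) / α) :=
      add_le_add (hFbound 1 φ one_pos) (htail 1 φ one_pos)
    _ = M₁ * jap 1 ^ (1-α) + M₂ / α := by rw [Real.one_rpow]; ring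
    _ ≤ 2*M₁ + M₂/α := by nlinarith [hjap1]
  have hFβper : ∀ (b φ : ℝ), 0 < b → Fβ b (φ + 2*Real.pi) = Fβ b φ := by
    intro b φ hb
    have h1 := hderiv b (φ + 2*Real.pi) hb
    have h2 := hderiv b φ hb
    have he : (fun u => F u (φ + 2*Real.pi)) = fun u => F u φ :=
      funext fun u => hper u φ
    rw [he] at h1
    exact h1.unique h2
  have hcont1 : Continuous fun φ : ℝ => F 1 φ := by
    have : ContinuousOn (fun φ : ℝ => F 1 φ) univ :=
      hF.comp ((continuous_const.prodMk continuous_id).continuousOn)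
        (fun x _ => Set.mk_mem_prod (mem_Ioi.2 one_pos) (mem_univ _))
    rw [← continuousOn_univ]
    exact this
  have hcontFβφ : ∀ b : ℝ, 0 < b → Continuous fun φ : ℝ => Fβ b φ := by
    intro b hb
    have : ContinuousOn (fun φ : ℝ => Fβ b φ) univ :=
      hFβ.comp ((continuous_const.prodMk continuous_id).continuousOn)
        (fun x _ => Set.mk_mem_prod (mem_Ioi.2 hb) (mem_univ _))
    rw [← continuousOn_univ]
    exact this
  have hcontf : Continuous f := by
    refine hcont1.add ?_
    refine continuous_of_dominated (fun φ => hmeas φ 1 one_pos)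
      (fun φ => ?_) (hdom 1 one_pos) ?_
    · rw [ae_restrict_iff' measurableSet_Ioi]
      exact ae_of_all _ fun b hb => hFb' b φ (one_pos.trans hb)
    · rw [ae_restrict_iff' measurableSet_Ioi]
      exact ae_of_all _ fun b hb => hcontFβφ b (one_pos.trans hb)
  have hperf : ∀ φ : ℝ, f (φ + 2*Real.pi) = f φ := by
    intro φ
    simp only [hfdef]
    rw [hper 1 φ]
    congr 1
    exact setIntegral_congr_fun measurableSet_Ioi
      (fun b hb => hFβper b φ (one_pos.trans hb))
  refine ⟨F₁, f, hcontf, hperf, ?_, ?_, ?_⟩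
  · intro β φ hβ
    simp [hF₁def]
  · -- CbNorm bound
    have hwsup : wSupNorm (fun β => jap β ^ α) F₁ ≤ ENNReal.ofReal ((8 + 2/α) * M) := by
      refine iSup_le fun β => iSup_le fun hβ => iSup_le fun φ => ?_
      refine ENNReal.ofReal_le_ofReal ?_
      have hjpos : (0:ℝ) < jap β ^ α := Real.rpow_pos_of_pos (jap_pos β) α
      rcases le_or_gt 1 β with h | h
      · -- large β
        have hβα : (0:ℝ) < β ^ α := Real.rpow_pos_of_pos hβ α
        have hj2 : jap β ^ α ≤ 2 * β ^ α := by
          calc jap β ^ α ≤ (2*β) ^ α :=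
            Real.rpow_le_rpow (jap_pos β).le (jap_le_two_mul h) hα0.le
          _ = 2 ^ α * β ^ α := Real.mul_rpow (by norm_num) hβ.le
          _ ≤ 2 * β ^ α := by
            have : (2:ℝ) ^ α ≤ 2 ^ (1:ℝ) :=
              Real.rpow_le_rpow_of_exponent_le one_le_two (by linarith)
            rw [Real.rpow_one] at this
            nlinarith
        have hbb : β ^ α * β ^ (-α) = 1 := by
          rw [← Real.rpow_add hβ]
          simp
        calc jap β ^ α * ‖F₁ β φ‖ ≤ (2 * β ^ α) * (M₂ * (β ^ (-α) / α)) :=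
          mul_le_mul hj2 (htail1 β φ hβ) (norm_nonneg _) (by positivity)
        _ = (2/α) * M₂ * (β ^ α * β ^ (-α)) := by ring
        _ = (2/α) * M₂ := by rw [hbb]; ring
        _ ≤ (8 + 2/α) * M := by
          simp only [hMdef]
          nlinarith [mul_nonneg (div_nonneg zero_le_two hα0.le) hM₁0,
            mul_nonneg (div_nonneg zero_le_two hα0.le) hM₂0]
      · -- small β
        have hj2 : jap β ^ α ≤ 2 := by
          calc jap β ^ α ≤ jap β ^ (1:ℝ) :=
            Real.rpow_le_rpow_of_exponent_le (one_le_jap β) (by linarith)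
          _ = jap β := Real.rpow_one _
          _ ≤ 2 := jap_le_two hβ.le h.le
        have hjb : jap β ^ (1-α) ≤ 2 := by
          calc jap β ^ (1-α) ≤ jap β ^ (1:ℝ) :=
            Real.rpow_le_rpow_of_exponent_le (one_le_jap β) (by linarith)
          _ = jap β := Real.rpow_one _
          _ ≤ 2 := jap_le_two hβ.le h.le
        have hnorm : ‖F₁ β φ‖ ≤ 4*M₁ + M₂/α := by
          calc ‖F₁ β φ‖ ≤ ‖F β φ‖ + ‖f φ‖ := norm_sub_le _ _
          _ ≤ M₁ * jap β ^ (1-α) + (2*M₁ + M₂/α) :=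
            add_le_add (hFbound β φ hβ) (hfbound φ)
          _ ≤ 4*M₁ + M₂/α := by nlinarith
        calc jap β ^ α * ‖F₁ β φ‖ ≤ 2 * (4*M₁ + M₂/α) :=
          mul_le_mul hj2 hnorm (norm_nonneg _) (by norm_num)
        _ ≤ (8 + 2/α) * M := by
          simp only [hMdef]
          have h2 : 2 * (M₂/α) = (2/α) * M₂ := by ring
          nlinarith [mul_nonneg (div_nonneg zero_le_two hα0.le) hM₁0,
            mul_nonneg (div_nonneg zero_le_two hα0.le) hM₂0]
    have hholder : holderSemi α F₁ ≤ ENNReal.ofReal (3 * M) := by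
      refine iSup_le fun φ => iSup_le fun β₁ => iSup_le fun β₂ => iSup_le fun hβ₂ =>
        iSup_le fun h21 => iSup_le fun h12 => iSup_le fun hd1 => ?_
      refine ENNReal.ofReal_le_ofReal ?_
      set d := β₁ - β₂ with hddef
      set s := β₁ + β₂ with hsdef
      have hd0 : 0 < d := by simp only [hddef]; linarith
      have hdβ : d < β₂ := by simp only [hddef]; linarith
      have hs3 : s ≤ 3 * β₂ := by simp only [hsdef]; linarith
      have hs0 : 0 < s := by simp only [hsdef]; linarith
      have hβ₁ : 0 < β₁ := lt_trans hβ₂ h21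
      have hjα : (0:ℝ) < jap β₂ ^ α := Real.rpow_pos_of_pos (jap_pos β₂) α
      set P := β₂ * jap β₂ ^ α with hPdef
      have hP0 : 0 < P := mul_pos hβ₂ hjα
      -- bound the difference
      have hdiff : F₁ β₁ φ - F₁ β₂ φ = ∫ x in β₂..β₁, Fβ x φ := by
        simp only [hF₁def]
        have := hFTC φ β₂ β₁ hβ₂ h21.le
        linear_combination this
      have hdiffb : ‖F₁ β₁ φ - F₁ β₂ φ‖ ≤ (M₂ / P) * d := by
        rw [hdiff]
        have hb : ∀ x ∈ Set.uIoc β₂ β₁, ‖Fβ x φ‖ ≤ M₂ / P := by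
          intro x hx
          rw [Set.uIoc_of_le h21.le] at hx
          have hx0 : 0 < x := lt_trans hβ₂ hx.1
          calc ‖Fβ x φ‖ ≤ M₂ / (x * jap x ^ α) := hFb x φ hx0
          _ ≤ M₂ / P := by
            refine div_le_div_of_nonneg_left hM₂0 hP0 ?_
            refine mul_le_mul hx.1.le (Real.rpow_le_rpow (jap_pos β₂).le
              (jap_mono hx.1.le hβ₂.le) hα0.le) hjα.le hx0.le
        calc ‖∫ x in β₂..β₁, Fβ x φ‖ ≤ (M₂ / P) * |β₁ - β₂| :=
          intervalIntegral.norm_integral_le_of_norm_le_const hb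
        _ = (M₂ / P) * d := by rw [abs_of_pos hd0]
      -- key scalar inequality
      have hkey : s ^ α * d ^ (1-α) ≤ 3 * P := by
        have hsb : s ^ α ≤ 3 * β₂ ^ α := by
          calc s ^ α ≤ (3*β₂) ^ α := Real.rpow_le_rpow hs0.le hs3 hα0.le
          _ = 3 ^ α * β₂ ^ α := Real.mul_rpow (by norm_num) hβ₂.le
          _ ≤ 3 * β₂ ^ α := by
            have h3 : (3:ℝ) ^ α ≤ 3 ^ (1:ℝ) :=
              Real.rpow_le_rpow_of_exponent_le (by norm_num) (by linarith)
            rw [Real.rpow_one] at h3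
            nlinarith [Real.rpow_pos_of_pos (show (0:ℝ) < β₂ from hβ₂) α]
        rcases le_or_gt β₂ 1 with hc | hc
        · have hdb : d ^ (1-α) ≤ β₂ ^ (1-α) :=
            Real.rpow_le_rpow hd0.le hdβ.le (by linarith)
          have hprod : β₂ ^ α * β₂ ^ (1-α) = β₂ := by
            rw [← Real.rpow_add hβ₂, show α + (1-α) = (1:ℝ) by ring, Real.rpow_one]
          have hone : (1:ℝ) ≤ jap β₂ ^ α :=
            Real.one_le_rpow (one_le_jap β₂) hα0.le
          calc s ^ α * d ^ (1-α) ≤ (3 * β₂ ^ α) * β₂ ^ (1-α) := by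
                exact mul_le_mul hsb hdb (Real.rpow_nonneg hd0.le _)
                  (mul_nonneg (by norm_num) (Real.rpow_nonneg hβ₂.le α))
          _ = 3 * β₂ := by rw [mul_assoc, hprod]
          _ ≤ 3 * P := by
            simp only [hPdef]
            nlinarith [mul_nonneg hβ₂.le (sub_nonneg.2 hone)]
        · have hdb : d ^ (1-α) ≤ 1 :=
            Real.rpow_le_one hd0.le (by linarith) (by linarith)
          have hjb : β₂ ^ α ≤ jap β₂ ^ α :=
            Real.rpow_le_rpow hβ₂.le (le_jap hβ₂.le) hα0.le
          calc s ^ α * d ^ (1-α) ≤ (3 * β₂ ^ α) * 1 := by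
                exact mul_le_mul hsb hdb (Real.rpow_nonneg hd0.le _)
                  (mul_nonneg (by norm_num) (Real.rpow_nonneg hβ₂.le α))
          _ = 3 * β₂ ^ α := by ring
          _ ≤ 3 * P := by
            simp only [hPdef]
            nlinarith [mul_nonneg (by linarith : (0:ℝ) ≤ β₂ - 1) hjα.le, hjb]
      -- combine
      have hdα : (0:ℝ) < d ^ α := Real.rpow_pos_of_pos hd0 α
      have hsα : (0:ℝ) < s ^ α := Real.rpow_pos_of_pos hs0 α
      have hdsplit : d ^ (1-α) * d ^ α = d := by
        rw [← Real.rpow_add hd0, show (1-α) + α = (1:ℝ) by ring, Real.rpow_one]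
      have main : s ^ α * ‖F₁ β₁ φ - F₁ β₂ φ‖ / d ^ α ≤ 3 * M₂ := by
        rw [div_le_iff₀ hdα]
        calc s ^ α * ‖F₁ β₁ φ - F₁ β₂ φ‖ ≤ s ^ α * ((M₂ / P) * d) :=
          mul_le_mul_of_nonneg_left hdiffb hsα.le
        _ = (M₂ / P) * (s ^ α * d ^ (1-α)) * d ^ α := by
          linear_combination (-(M₂ / P * s ^ α)) * hdsplit
        _ ≤ (M₂ / P) * (3 * P) * d ^ α := by
          refine mul_le_mul_of_nonneg_right
            (mul_le_mul_of_nonneg_left hkey (by positivity)) hdα.le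
        _ = 3 * M₂ * d ^ α := by
          have hPP : M₂ / P * (3 * P) = 3 * M₂ := by
            field_simp
          rw [hPP]
      calc s ^ α * ‖F₁ β₁ φ - F₁ β₂ φ‖ / d ^ α ≤ 3 * M₂ := main
      _ ≤ 3 * M := by simp only [hMdef]; linarith
    calc CbNorm α F₁ ≤ ENNReal.ofReal ((8 + 2/α) * M) + ENNReal.ofReal (3 * M) :=
      add_le_add hwsup hholder
    _ = ENNReal.ofReal ((8 + 2/α) * M + 3 * M) :=
      (ENNReal.ofReal_add (by positivity) (by positivity)).symm
    _ = ENNReal.ofReal ((11 + 2/α) * M) := by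
      rw [show (8 + 2/α) * M + 3 * M = (11 + 2/α) * M by ring]
  · intro φ
    calc ‖f φ‖ ≤ 2*M₁ + M₂/α := hfbound φ
    _ ≤ (11 + 2/α) * M := by
      simp only [hMdef]
      have he : (11 + 2/α) * (M₁ + M₂) = 11*M₁ + 11*M₂ + 2*(M₁/α) + 2*(M₂/α) := by
        ring
      linarith [div_nonneg hM₁0 hα0.le, div_nonneg hM₂0 hα0.le, hM₁0, hM₂0]
end

section
/- Let q₁, q₂ > 0 and let q ∈ C^∞([0,∞); (0,∞)) satisfy q(x) = q₁² for x ∈ [0,1] and q(x) = q₂² for x ≥ 2. Then there exist twice continuously differentiable functions y₁, y₂ : (0,∞) → ℝ solving x²y''(x) + x y'(x) − q(x) y(x) = 0 for all x > 0, and real constants C₁, C₂, C₃, C₄ with C₁ ≠ 0 and C₃ ≠ 0, such that: y₁(x) = x^{q₁} for x ∈ (0,1), y₁(x) = C₁x^{q₂} + C₂x^{−q₂} for x > 2, and y₁ > 0 on [1,2]; y₂(x) = C₃x^{−q₁} + C₄x^{q₁} for x ∈ (0,1), y₂(x) = x^{−q₂} for x > 2, and y₂ > 0 on [1,2]. Moreover,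 the Wronskian satisfies y₁(x)y₂'(x) − y₂(x)y₁'(x) = −2q₁C₃/x for all x > 0; in particular {y₁, y₂} is a fundamental system of solutions. -/
open Set

theorem hasDerivWithinAt_singleton' (f : ℝ → ℝ × ℝ) (a : ℝ) (d : ℝ × ℝ) :
    HasDerivWithinAt f d {a} a := by
  refine HasFDerivWithinAt.of_not_accPt ?_
  rw [accPt_iff_clusterPt, Filter.inf_principal]
  simp [ClusterPt]

theorem ode_forward (a b : ℝ) (hab : a ≤ b) (v : ℝ → ℝ × ℝ → ℝ × ℝ) (K : NNReal)
    (hlip : ∀ t ∈ Icc a b, LipschitzWith K (v t))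
    (hcont : ∀ x, ContinuousOn (fun t => v t x) (Icc a b)) (x₀ : ℝ × ℝ) :
    ∃ f : ℝ → ℝ × ℝ, f a = x₀ ∧ ∀ t ∈ Icc a b, HasDerivWithinAt f (v t (f t)) (Icc a b) t := by
  obtain ⟨M, hM⟩ := (isCompact_Icc).exists_bound_of_continuousOn (hcont 0)
  set M' : ℝ := max M 0 with hM'def
  have hM'0 : 0 ≤ M' := le_max_right _ _
  have hM' : ∀ t ∈ Icc a b, ‖v t 0‖ ≤ M' := fun t ht => (hM t ht).trans (le_max_left _ _)
  have hden : (0:ℝ) < 2 * K + M' + 1 := by positivity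
  set h : ℝ := 1 / (2 * K + M' + 1) with hh
  have hpos : 0 < h := by positivity
  have step : ∀ (m m' : ℝ), a ≤ m → m ≤ m' → m' ≤ b → m' ≤ m + h → ∀ x₁ : ℝ × ℝ,
      ∃ g : ℝ → ℝ × ℝ, g m = x₁ ∧ ∀ t ∈ Icc m m',
        HasDerivWithinAt g (v t (g t)) (Icc m m') t := by
    intro m m' ham hmm' hm'b hstep x₁
    have hsub : Icc m m' ⊆ Icc a b := Icc_subset_Icc ham hm'b
    have hC0' : (0:ℝ) ≤ K * (2 * ‖x₁‖ + 1) + M' := by positivity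
    have ha0 : (0:ℝ) ≤ ‖x₁‖ + 1 := by positivity
    have hpl : IsPicardLindelof v (tmin := m) (tmax := m') ⟨m, le_refl m, hmm'⟩ x₁
        ⟨‖x₁‖ + 1, ha0⟩ 0 ⟨K * (2 * ‖x₁‖ + 1) + M', hC0'⟩ K := by
      constructor
      · intro t ht; exact ((hlip t (hsub ht))).lipschitzOnWith
      · intro x _; exact (hcont x).mono hsub
      · intro t ht x hx
        show ‖v t x‖ ≤ K * (2 * ‖x₁‖ + 1) + M'
        have h1 : ‖v t x - v t x₁‖ ≤ K * (‖x₁‖ + 1) := by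
          have h2 := (hlip t (hsub ht)).dist_le_mul x x₁
          rw [dist_eq_norm] at h2
          exact h2.trans (by
            have : dist x x₁ ≤ ‖x₁‖ + 1 := Metric.mem_closedBall.mp hx
            exact mul_le_mul_of_nonneg_left this K.coe_nonneg)
        have h2 : ‖v t x₁ - v t 0‖ ≤ K * ‖x₁‖ := by
          have h2 := (hlip t (hsub ht)).dist_le_mul x₁ 0
          rw [dist_eq_norm] at h2
          simpa [dist_eq_norm] using h2
        have h3 : ‖v t 0‖ ≤ M' := hM' t (hsub ht)
        calc ‖v t x‖ = ‖(v t x - v t x₁) + (v t x₁ - v t 0) + v t 0‖ := by ring_nf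
          _ ≤ ‖(v t x - v t x₁) + (v t x₁ - v t 0)‖ + ‖v t 0‖ := norm_add_le _ _
          _ ≤ ‖v t x - v t x₁‖ + ‖v t x₁ - v t 0‖ + ‖v t 0‖ := by
              gcongr; exact norm_add_le _ _
          _ ≤ K * (‖x₁‖ + 1) + K * ‖x₁‖ + M' := by gcongr
          _ = K * (2 * ‖x₁‖ + 1) + M' := by ring
      · simp only [NNReal.coe_mk, NNReal.coe_zero, sub_zero]
        have hmax : max (m' - m) (m - m) = m' - m := by
          rw [sub_self]; exact max_eq_left (by linarith)
        rw [hmax]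
        have hC0 : (0:ℝ) ≤ K * (2 * ‖x₁‖ + 1) + M' := by positivity
        have h1 : (K * (2 * ‖x₁‖ + 1) + M') * (m' - m) ≤ (K * (2 * ‖x₁‖ + 1) + M') * h :=
          mul_le_mul_of_nonneg_left (by linarith) hC0
        refine h1.trans ?_
        rw [hh, mul_one_div, div_le_iff₀ hden]
        show (K:ℝ) * (2 * ‖x₁‖ + 1) + M' ≤ (‖x₁‖ + 1) * (2 * K + M' + 1)
        nlinarith [norm_nonneg x₁, K.coe_nonneg]
    obtain ⟨g, hg0, hg⟩ := hpl.exists_eq_forall_mem_Icc_hasDerivWithinAt₀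
    exact ⟨g, hg0, hg⟩
  have main : ∀ n : ℕ, ∃ f : ℝ → ℝ × ℝ, f a = x₀ ∧
      ∀ t ∈ Icc a (min b (a + n * h)),
        HasDerivWithinAt f (v t (f t)) (Icc a (min b (a + n * h))) t := by
    intro n
    induction n with
    | zero =>
      refine ⟨fun _ => x₀, rfl, ?_⟩
      intro t ht
      simp only [Nat.cast_zero, zero_mul, add_zero, min_eq_right hab, Icc_self] at ht ⊢
      rcases ht with rfl
      exact hasDerivWithinAt_singleton' _ _ _
    | succ n ih =>
      obtain ⟨f, hf0, hf⟩ := ih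
      by_cases hcase : b ≤ a + n * h
      · have e1 : min b (a + n * h) = b := min_eq_left hcase
        have e2 : min b (a + (n + 1 : ℕ) * h) = b := min_eq_left (by push_cast; nlinarith)
        refine ⟨f, hf0, ?_⟩
        rw [e2]; rw [e1] at hf; exact hf
      · push_neg at hcase
        set m := a + n * h with hm
        have e1 : min b m = m := min_eq_right hcase.le
        set m' := min b (a + (n + 1 : ℕ) * h) with hm'
        have ham : a ≤ m := by
          have : (0:ℝ) ≤ n * h := by positivity
          linarith
        have hmm' : m ≤ m' := le_min hcase.le (by push_cast; nlinarith)
        have hm'b : m' ≤ b := min_le_left _ _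
        have hm'h : m' ≤ m + h := (min_le_right _ _).trans_eq (by push_cast; ring)
        rw [e1] at hf
        obtain ⟨g, hg0, hg⟩ := step m m' ham hmm' hm'b hm'h (f m)
        rw [hm'] at hmm' hg ⊢
        set F : ℝ → ℝ × ℝ := fun t => if t ≤ m then f t else g t with hFdef
        have hFf : ∀ s, s ≤ m → F s = f s := fun s hs => if_pos hs
        have hFg : ∀ s, m ≤ s → F s = g s := by
          intro s hs
          rcases eq_or_lt_of_le hs with rfl | h'
          · simp only [hFdef, if_pos le_rfl, hg0]
          · exact if_neg (not_le.2 h')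
        refine ⟨F, by rw [hFf a ham]; exact hf0, ?_⟩
        have hIcc : Icc a (min b (a + (n + 1 : ℕ) * h)) = Icc a m ∪ Icc m (min b (a + (n + 1 : ℕ) * h)) :=
          (Icc_union_Icc_eq_Icc ham hmm').symm
        intro t ht
        rcases lt_trichotomy t m with h1 | rfl | h2
        · have htm : t ∈ Icc a m := ⟨ht.1, h1.le⟩
          have hd : HasDerivWithinAt F (v t (F t)) (Icc a m) t := by
            rw [hFf t h1.le]
            exact (hf t htm).congr (fun s hs => hFf s hs.2) (hFf t h1.le)
          refine hd.mono_of_mem_nhdsWithin ?_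
          have heq : Icc a (min b (a + (n + 1 : ℕ) * h)) ∩ Iic m = Icc a m := by
            ext s
            simp only [mem_inter_iff, mem_Icc, mem_Iic]
            constructor
            · rintro ⟨⟨u1, _⟩, u3⟩; exact ⟨u1, u3⟩
            · rintro ⟨u1, u3⟩; exact ⟨⟨u1, u3.trans hmm'⟩, u3⟩
          rw [← heq]
          exact Filter.inter_mem self_mem_nhdsWithin
            (mem_nhdsWithin_of_mem_nhds (Iic_mem_nhds h1))
        · have hd1 : HasDerivWithinAt F (v m (F m)) (Icc a m) m := by
            rw [hFf m le_rfl]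
            exact (hf m ⟨ham, le_rfl⟩).congr (fun s hs => hFf s hs.2) (hFf m le_rfl)
          have hd2 : HasDerivWithinAt F (v m (F m)) (Icc m (min b (a + (n + 1 : ℕ) * h))) m := by
            rw [hFg m le_rfl]
            exact (hg m ⟨le_rfl, hmm'⟩).congr (fun s hs => hFg s hs.1) (hFg m le_rfl)
          have := hd1.union hd2
          rwa [← hIcc] at this
        · have htm : t ∈ Icc m (min b (a + (n + 1 : ℕ) * h)) := ⟨h2.le, ht.2⟩
          have hd : HasDerivWithinAt F (v t (F t)) (Icc m (min b (a + (n + 1 : ℕ) * h))) t := by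
            rw [hFg t h2.le]
            exact (hg t htm).congr (fun s hs => hFg s hs.1) (hFg t h2.le)
          refine hd.mono_of_mem_nhdsWithin ?_
          have heq : Icc a (min b (a + (n + 1 : ℕ) * h)) ∩ Ici m = Icc m (min b (a + (n + 1 : ℕ) * h)) := by
            ext s
            simp only [mem_inter_iff, mem_Icc, mem_Ici]
            constructor
            · rintro ⟨⟨_, u2⟩, u3⟩; exact ⟨u3, u2⟩
            · rintro ⟨u1, u2⟩; exact ⟨⟨ham.trans u1, u2⟩, u1⟩
          rw [← heq]
          exact Filter.inter_mem self_mem_nhdsWithin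
            (mem_nhdsWithin_of_mem_nhds (Ici_mem_nhds h2))
  obtain ⟨n, hn⟩ := exists_nat_ge ((b - a) / h)
  have hbn : b ≤ a + n * h := by
    rw [div_le_iff₀ hpos] at hn; linarith
  obtain ⟨f, hf0, hf⟩ := main n
  rw [min_eq_left hbn] at hf
  exact ⟨f, hf0, hf⟩

theorem ode_backward (a b : ℝ) (hab : a ≤ b) (v : ℝ → ℝ × ℝ → ℝ × ℝ) (K : NNReal)
    (hlip : ∀ t ∈ Icc a b, LipschitzWith K (v t))
    (hcont : ∀ x, ContinuousOn (fun t => v t x) (Icc a b)) (x₀ : ℝ × ℝ) :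
    ∃ f : ℝ → ℝ × ℝ, f b = x₀ ∧ ∀ t ∈ Icc a b, HasDerivWithinAt f (v t (f t)) (Icc a b) t := by
  have hmem : ∀ t ∈ Icc a b, a + b - t ∈ Icc a b := by
    intro t ht; exact ⟨by linarith [ht.2], by linarith [ht.1]⟩
  set w : ℝ → ℝ × ℝ → ℝ × ℝ := fun t x => -(v (a + b - t) x) with hw
  have hlipw : ∀ t ∈ Icc a b, LipschitzWith K (w t) := by
    intro t ht
    have h1 := hlip _ (hmem t ht)
    intro x y
    simpa [hw, edist_neg] using h1 x y
  have hcontw : ∀ x, ContinuousOn (fun t => w t x) (Icc a b) := by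
    intro x
    have hσ : ContinuousOn (fun t : ℝ => a + b - t) (Icc a b) :=
      (continuous_const.sub continuous_id).continuousOn
    exact ((hcont x).comp hσ hmem).neg
  obtain ⟨f, hf0, hf⟩ := ode_forward a b hab w K hlipw hcontw x₀
  refine ⟨fun t => f (a + b - t), by simpa using hf0, ?_⟩
  intro t ht
  have hσd : HasDerivWithinAt (fun t : ℝ => a + b - t) (-1) (Icc a b) t :=
    ((hasDerivAt_id t).const_sub (a + b)).hasDerivWithinAt
  have hcomp := (hf _ (hmem t ht)).scomp t hσd hmem
  have : a + b - (a + b - t) = t := by ring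
  simpa [hw, this, Function.comp_def] using hcomp

theorem second_order_ode (a b : ℝ) (hab : a ≤ b) (p r : ℝ → ℝ)
    (hp : ContinuousOn p (Icc a b)) (hr : ContinuousOn r (Icc a b))
    (t₀ : ℝ) (ht₀ : t₀ = a ∨ t₀ = b) (y₀ z₀ : ℝ) :
    ∃ y z : ℝ → ℝ, y t₀ = y₀ ∧ z t₀ = z₀ ∧
      (∀ t ∈ Icc a b, HasDerivWithinAt y (z t) (Icc a b) t) ∧
      (∀ t ∈ Icc a b, HasDerivWithinAt z (p t * y t + r t * z t) (Icc a b) t) := by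
  obtain ⟨P, hP⟩ := (isCompact_Icc).exists_bound_of_continuousOn hp
  obtain ⟨R, hR⟩ := (isCompact_Icc).exists_bound_of_continuousOn hr
  set P' : ℝ := max P 0 with hP'
  set R' : ℝ := max R 0 with hR'
  have hP2 : ∀ t ∈ Icc a b, |p t| ≤ P' := fun t ht =>
    (Real.norm_eq_abs (p t) ▸ hP t ht).trans (le_max_left _ _)
  have hR2 : ∀ t ∈ Icc a b, |r t| ≤ R' := fun t ht =>
    (Real.norm_eq_abs (r t) ▸ hR t ht).trans (le_max_left _ _)
  have hP'0 : 0 ≤ P' := le_max_right _ _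
  have hR'0 : 0 ≤ R' := le_max_right _ _
  set v : ℝ → ℝ × ℝ → ℝ × ℝ := fun t x => (x.2, p t * x.1 + r t * x.2) with hv
  set K : NNReal := (1 + P' + R').toNNReal with hK
  have hKe : (K : ℝ) = 1 + P' + R' := Real.coe_toNNReal _ (by linarith)
  have hlip : ∀ t ∈ Icc a b, LipschitzWith K (v t) := by
    intro t ht
    apply LipschitzWith.of_dist_le_mul
    intro x y
    rw [hKe, Prod.dist_eq, Prod.dist_eq]
    have d1 : (0:ℝ) ≤ dist x.1 y.1 := dist_nonneg
    have d2 : (0:ℝ) ≤ dist x.2 y.2 := dist_nonneg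
    apply max_le
    · calc dist x.2 y.2 ≤ max (dist x.1 y.1) (dist x.2 y.2) := le_max_right _ _
        _ ≤ (1 + P' + R') * max (dist x.1 y.1) (dist x.2 y.2) := by
            nlinarith [le_max_left (dist x.1 y.1) (dist x.2 y.2), le_max_right (dist x.1 y.1) (dist x.2 y.2)]
    · simp only [hv, Real.dist_eq] at *
      have hpt := hP2 t ht
      have hrt := hR2 t ht
      have h1 : |p t * x.1 + r t * x.2 - (p t * y.1 + r t * y.2)| ≤ P' * |x.1 - y.1| + R' * |x.2 - y.2| := by
        have : p t * x.1 + r t * x.2 - (p t * y.1 + r t * y.2) = p t * (x.1 - y.1) + r t * (x.2 - y.2) := by ring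
        rw [this]
        refine (abs_add_le _ _).trans ?_
        rw [abs_mul, abs_mul]
        gcongr
      refine h1.trans ?_
      have m1 : |x.1 - y.1| ≤ max |x.1 - y.1| |x.2 - y.2| := le_max_left _ _
      have m2 : |x.2 - y.2| ≤ max |x.1 - y.1| |x.2 - y.2| := le_max_right _ _
      have m0 : (0:ℝ) ≤ max |x.1 - y.1| |x.2 - y.2| := le_trans (abs_nonneg _) m1
      nlinarith
  have hcont : ∀ x : ℝ × ℝ, ContinuousOn (fun t => v t x) (Icc a b) := by
    intro x
    exact continuousOn_const.prodMk ((hp.mul continuousOn_const).add (hr.mul continuousOn_const))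
  have key : ∃ f : ℝ → ℝ × ℝ, f t₀ = (y₀, z₀) ∧
      ∀ t ∈ Icc a b, HasDerivWithinAt f (v t (f t)) (Icc a b) t := by
    rcases ht₀ with h | h
    · obtain ⟨f, h1, h2⟩ := ode_forward a b hab v K hlip hcont (y₀, z₀)
      exact ⟨f, by rw [h, h1], h2⟩
    · obtain ⟨f, h1, h2⟩ := ode_backward a b hab v K hlip hcont (y₀, z₀)
      exact ⟨f, by rw [h, h1], h2⟩
  obtain ⟨f, hf0, hf⟩ := key
  refine ⟨fun t => (f t).1, fun t => (f t).2, by simp [hf0], by simp [hf0], ?_, ?_⟩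
  · intro t ht; exact (hf t ht).fst
  · intro t ht; exact (hf t ht).snd

theorem glue_hasDerivAt {a : ℝ} {F f g : ℝ → ℝ} {d : ℝ}
    (hf : HasDerivWithinAt f d (Iic a) a) (hg : HasDerivWithinAt g d (Ici a) a)
    (hFf : ∀ᶠ x in nhdsWithin a (Iic a), F x = f x)
    (hFg : ∀ᶠ x in nhdsWithin a (Ici a), F x = g x) :
    HasDerivAt F d a := by
  have h1 := hf.congr_of_eventuallyEq hFf (hFf.self_of_nhdsWithin (mem_Iic.2 le_rfl))
  have h2 := hg.congr_of_eventuallyEq hFg (hFg.self_of_nhdsWithin (mem_Ici.2 le_rfl))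
  have h3 := h1.union h2
  rwa [Iic_union_Ici, hasDerivWithinAt_univ] at h3

theorem hasDerivAt_Crpow (C c : ℝ) {x : ℝ} (hx : 0 < x) :
    HasDerivAt (fun y : ℝ => C * y ^ c) (C * c * x ^ (c - 1)) x := by
  have h := (Real.hasDerivAt_rpow_const (p := c) (Or.inl hx.ne')).const_mul C
  rw [mul_assoc]; exact h

theorem rpow_sub_one' {x : ℝ} (hx : 0 < x) (c : ℝ) : x ^ (c - 1) = x ^ c / x := by
  rw [Real.rpow_sub hx, Real.rpow_one]

theorem rpow_sub_two' {x : ℝ} (hx : 0 < x) (c : ℝ) : x ^ (c - 2) = x ^ c / x ^ 2 := by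
  rw [Real.rpow_sub hx, show (2:ℝ) = ((2:ℕ):ℝ) by norm_num, Real.rpow_natCast]

theorem mem_nhdsWithin_Ici_Icc {a b : ℝ} (h : a < b) : Icc a b ∈ nhdsWithin a (Ici a) := by
  rw [← Ici_inter_Iic]
  exact Filter.inter_mem self_mem_nhdsWithin (mem_nhdsWithin_of_mem_nhds (Iic_mem_nhds h))

theorem mem_nhdsWithin_Iic_Icc {a b : ℝ} (h : a < b) : Icc a b ∈ nhdsWithin b (Iic b) := by
  rw [← Iic_inter_Ici]
  exact Filter.inter_mem self_mem_nhdsWithin (mem_nhdsWithin_of_mem_nhds (Ici_mem_nhds h))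

theorem piecewise_hasDerivAt (L M Rg dL dM dR : ℝ → ℝ)
    (hL : ∀ x : ℝ, 0 < x → HasDerivAt L (dL x) x)
    (hM : ∀ t ∈ Icc (1:ℝ) 2, HasDerivWithinAt M (dM t) (Icc 1 2) t)
    (hR : ∀ x : ℝ, 2 ≤ x → HasDerivAt Rg (dR x) x)
    (e1 : L 1 = M 1) (e2 : dL 1 = dM 1) (e3 : M 2 = Rg 2) (e4 : dM 2 = dR 2)
    (x : ℝ) (hx : 0 < x) :
    HasDerivAt (fun y => if y < 1 then L y else if y ≤ 2 then M y else Rg y)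
      (if x < 1 then dL x else if x ≤ 2 then dM x else dR x) x := by
  set F : ℝ → ℝ := fun y => if y < 1 then L y else if y ≤ 2 then M y else Rg y with hF
  have hFM : ∀ y ∈ Icc (1:ℝ) 2, F y = M y := by
    intro y hy
    simp only [hF, if_neg (not_lt.2 hy.1), if_pos hy.2]
  rcases lt_trichotomy x 1 with h1 | rfl | h1
  · rw [if_pos h1]
    refine (hL x hx).congr_of_eventuallyEq ?_
    filter_upwards [Iio_mem_nhds h1] with y hy
    exact if_pos hy
  · rw [if_neg (lt_irrefl 1), if_pos one_le_two]
    apply glue_hasDerivAt (f := L) (g := M)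
    · rw [← e2]; exact (hL 1 one_pos).hasDerivWithinAt
    · exact (hM 1 ⟨le_rfl, one_le_two⟩).mono_of_mem_nhdsWithin (mem_nhdsWithin_Ici_Icc one_lt_two)
    · refine Filter.eventually_of_mem self_mem_nhdsWithin ?_
      intro y hy
      rcases lt_or_eq_of_le (mem_Iic.1 hy) with h | h
      · exact if_pos h
      · subst h
        rw [hFM 1 ⟨le_rfl, one_le_two⟩, ← e1]
    · refine Filter.eventually_of_mem (mem_nhdsWithin_Ici_Icc one_lt_two) ?_
      exact hFM
  · rcases lt_trichotomy x 2 with h2 | rfl | h2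
    · rw [if_neg (not_lt.2 h1.le), if_pos h2.le]
      refine ((hM x ⟨h1.le, h2.le⟩).hasDerivAt (Icc_mem_nhds h1 h2)).congr_of_eventuallyEq ?_
      filter_upwards [Ioo_mem_nhds h1 h2] with y hy
      exact hFM y (Ioo_subset_Icc_self hy)
    · rw [if_neg (by norm_num : ¬ (2:ℝ) < 1), if_pos le_rfl]
      apply glue_hasDerivAt (f := M) (g := Rg)
      · exact (hM 2 ⟨one_le_two, le_rfl⟩).mono_of_mem_nhdsWithin (mem_nhdsWithin_Iic_Icc one_lt_two)
      · rw [e4]; exact (hR 2 le_rfl).hasDerivWithinAt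
      · exact Filter.eventually_of_mem (mem_nhdsWithin_Iic_Icc one_lt_two) hFM
      · refine Filter.eventually_of_mem self_mem_nhdsWithin ?_
        intro y hy
        rcases lt_or_eq_of_le (mem_Ici.1 hy) with h | h
        · simp only [hF, if_neg (by linarith : ¬ y < 1), if_neg (not_le.2 h)]
        · rw [← h, hFM 2 ⟨one_le_two, le_rfl⟩, e3]
    · rw [if_neg (by linarith : ¬ x < 1), if_neg (not_le.2 h2)]
      refine (hR x (by linarith)).congr_of_eventuallyEq ?_
      filter_upwards [Ioi_mem_nhds h2] with y hy
      simp only [hF, if_neg (by linarith [mem_Ioi.1 hy] : ¬ y < 1),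
        if_neg (not_le.2 (mem_Ioi.1 hy))]

set_option maxHeartbeats 4000000 in
theorem statement16 (q₁ q₂ : ℝ) (hq₁ : 0 < q₁) (hq₂ : 0 < q₂)
    (q : ℝ → ℝ) (hq : ContDiffOn ℝ (⊤ : ℕ∞) q (Set.Ici 0))
    (hqpos : ∀ x ∈ Set.Ici (0:ℝ), 0 < q x)
    (hqa : ∀ x ∈ Set.Icc (0:ℝ) 1, q x = q₁ ^ 2)
    (hqb : ∀ x ∈ Set.Ici (2:ℝ), q x = q₂ ^ 2) :
    ∃ (y₁ y₂ dy₁ dy₂ ddy₁ ddy₂ : ℝ → ℝ) (C₁ C₂ C₃ C₄ : ℝ),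
      (∀ x : ℝ, 0 < x → HasDerivAt y₁ (dy₁ x) x) ∧
      (∀ x : ℝ, 0 < x → HasDerivAt dy₁ (ddy₁ x) x) ∧
      ContinuousOn ddy₁ (Set.Ioi 0) ∧
      (∀ x : ℝ, 0 < x → HasDerivAt y₂ (dy₂ x) x) ∧
      (∀ x : ℝ, 0 < x → HasDerivAt dy₂ (ddy₂ x) x) ∧
      ContinuousOn ddy₂ (Set.Ioi 0) ∧
      (∀ x : ℝ, 0 < x → x^2 * ddy₁ x + x * dy₁ x - q x * y₁ x = 0) ∧
      (∀ x : ℝ, 0 < x → x^2 * ddy₂ x + x * dy₂ x - q x * y₂ x = 0) ∧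
      C₁ ≠ 0 ∧ C₃ ≠ 0 ∧
      (∀ x ∈ Set.Ioo (0:ℝ) 1, y₁ x = x ^ q₁) ∧
      (∀ x ∈ Set.Ioi (2:ℝ), y₁ x = C₁ * x ^ q₂ + C₂ * x ^ (-q₂)) ∧
      (∀ x ∈ Set.Icc (1:ℝ) 2, 0 < y₁ x) ∧
      (∀ x ∈ Set.Ioo (0:ℝ) 1, y₂ x = C₃ * x ^ (-q₁) + C₄ * x ^ q₁) ∧
      (∀ x ∈ Set.Ioi (2:ℝ), y₂ x = x ^ (-q₂)) ∧
      (∀ x ∈ Set.Icc (1:ℝ) 2, 0 < y₂ x) ∧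
      (∀ x : ℝ, 0 < x → y₁ x * dy₂ x - y₂ x * dy₁ x = -(2 * q₁ * C₃) / x) := by
  have hq₁ne : q₁ ≠ 0 := ne_of_gt hq₁
  have hq₂ne : q₂ ≠ 0 := ne_of_gt hq₂
  have hqc : ContinuousOn q (Ici 0) := hq.continuousOn
  have hsub12 : Icc (1:ℝ) 2 ⊆ Ici (0:ℝ) := fun t ht => le_trans zero_le_one ht.1
  have hIccpos : ∀ t ∈ Icc (1:ℝ) 2, (0:ℝ) < t := fun t ht => lt_of_lt_of_le one_pos ht.1
  set p : ℝ → ℝ := fun t => q t / t ^ 2 with hpdef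
  set r : ℝ → ℝ := fun t => -1 / t with hrdef
  have hpcont : ContinuousOn p (Icc 1 2) :=
    (hqc.mono hsub12).div ((continuous_pow 2).continuousOn)
      (fun t ht => pow_ne_zero 2 (hIccpos t ht).ne')
  have hrcont : ContinuousOn r (Icc 1 2) :=
    continuousOn_const.div continuousOn_id (fun t ht => (hIccpos t ht).ne')
  obtain ⟨u, w, hu1, hw1, hu, hw⟩ :=
    second_order_ode 1 2 one_le_two p r hpcont hrcont 1 (Or.inl rfl) 1 q₁
  obtain ⟨u₂, w₂, hu₂2, hw₂2, hu₂, hw₂⟩ :=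
    second_order_ode 1 2 one_le_two p r hpcont hrcont 2 (Or.inr rfl)
      ((2:ℝ) ^ (-q₂)) (-q₂ * (2:ℝ) ^ (-q₂ - 1))
  -- constants
  set T : ℝ := (2:ℝ) ^ q₂ with hTdef
  have hT : 0 < T := Real.rpow_pos_of_pos two_pos _
  set C₁ : ℝ := (q₂ * u 2 + 2 * w 2) / (2 * q₂ * T) with hC₁def
  set C₂ : ℝ := (q₂ * u 2 - 2 * w 2) * T / (2 * q₂) with hC₂def
  set C₃ : ℝ := (q₁ * u₂ 1 - w₂ 1) / (2 * q₁) with hC₃def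
  set C₄ : ℝ := (q₁ * u₂ 1 + w₂ 1) / (2 * q₁) with hC₄def
  -- rpow values at 2
  have h2negq₂ : (2:ℝ) ^ (-q₂) = T⁻¹ := by rw [Real.rpow_neg (le_of_lt two_pos), hTdef]
  have h2q₂m1 : (2:ℝ) ^ (q₂ - 1) = T / 2 := by rw [rpow_sub_one' two_pos, hTdef]
  have h2negq₂m1 : (2:ℝ) ^ (-q₂ - 1) = T⁻¹ / 2 := by
    rw [rpow_sub_one' two_pos, h2negq₂]
  -- matching conditions y₁ at 2
  have hB2 : u 2 = C₁ * (2:ℝ) ^ q₂ + C₂ * (2:ℝ) ^ (-q₂) := by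
    rw [h2negq₂, ← hTdef, hC₁def, hC₂def]
    field_simp
    ring
  have hB'2 : w 2 = C₁ * q₂ * (2:ℝ) ^ (q₂ - 1) + C₂ * (-q₂) * (2:ℝ) ^ (-q₂ - 1) := by
    rw [h2q₂m1, h2negq₂m1, hC₁def, hC₂def]
    field_simp
    ring
  -- matching conditions y₂ at 1
  have hD1 : u₂ 1 = C₃ * (1:ℝ) ^ (-q₁) + C₄ * (1:ℝ) ^ q₁ := by
    rw [Real.one_rpow, Real.one_rpow, hC₃def, hC₄def]
    field_simp
    ring
  have hD'1 : w₂ 1 = C₃ * (-q₁) * (1:ℝ) ^ (-q₁ - 1) + C₄ * q₁ * (1:ℝ) ^ (q₁ - 1) := by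
    rw [Real.one_rpow, Real.one_rpow, hC₃def, hC₄def]
    field_simp
    ring
  -- piecewise functions
  set y₁ : ℝ → ℝ := fun x =>
    if x < 1 then x ^ q₁ else if x ≤ 2 then u x else C₁ * x ^ q₂ + C₂ * x ^ (-q₂) with hy₁def
  set dy₁ : ℝ → ℝ := fun x =>
    if x < 1 then q₁ * x ^ (q₁ - 1) else if x ≤ 2 then w x
    else C₁ * q₂ * x ^ (q₂ - 1) + C₂ * (-q₂) * x ^ (-q₂ - 1) with hdy₁def
  set y₂ : ℝ → ℝ := fun x =>
    if x < 1 then C₃ * x ^ (-q₁) + C₄ * x ^ q₁ else if x ≤ 2 then u₂ x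
    else x ^ (-q₂) with hy₂def
  set dy₂ : ℝ → ℝ := fun x =>
    if x < 1 then C₃ * (-q₁) * x ^ (-q₁ - 1) + C₄ * q₁ * x ^ (q₁ - 1) else if x ≤ 2 then w₂ x
    else -q₂ * x ^ (-q₂ - 1) with hdy₂def
  set ddy₁ : ℝ → ℝ := fun x => (q x * y₁ x - x * dy₁ x) / x ^ 2 with hddy₁def
  set ddy₂ : ℝ → ℝ := fun x => (q x * y₂ x - x * dy₂ x) / x ^ 2 with hddy₂def
  -- branch values
  have hy₁M : ∀ x ∈ Icc (1:ℝ) 2, y₁ x = u x := fun x hx => by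
    simp only [hy₁def, if_neg (not_lt.2 hx.1), if_pos hx.2]
  have hdy₁M : ∀ x ∈ Icc (1:ℝ) 2, dy₁ x = w x := fun x hx => by
    simp only [hdy₁def, if_neg (not_lt.2 hx.1), if_pos hx.2]
  have hy₂M : ∀ x ∈ Icc (1:ℝ) 2, y₂ x = u₂ x := fun x hx => by
    simp only [hy₂def, if_neg (not_lt.2 hx.1), if_pos hx.2]
  have hdy₂M : ∀ x ∈ Icc (1:ℝ) 2, dy₂ x = w₂ x := fun x hx => by
    simp only [hdy₂def, if_neg (not_lt.2 hx.1), if_pos hx.2]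
  -- derivative of y₁
  have claim1 : ∀ x : ℝ, 0 < x → HasDerivAt y₁ (dy₁ x) x := by
    intro x hx
    have h := piecewise_hasDerivAt (fun y => y ^ q₁) u
      (fun y => C₁ * y ^ q₂ + C₂ * y ^ (-q₂))
      (fun y => q₁ * y ^ (q₁ - 1)) w
      (fun y => C₁ * q₂ * y ^ (q₂ - 1) + C₂ * (-q₂) * y ^ (-q₂ - 1))
      (fun y hy => Real.hasDerivAt_rpow_const (Or.inl hy.ne'))
      hu
      (fun y hy => (hasDerivAt_Crpow C₁ q₂ (lt_of_lt_of_le two_pos hy)).add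
        (hasDerivAt_Crpow C₂ (-q₂) (lt_of_lt_of_le two_pos hy)))
      (by show (1:ℝ) ^ q₁ = u 1; rw [Real.one_rpow, hu1])
      (by show q₁ * (1:ℝ) ^ (q₁ - 1) = w 1; rw [Real.one_rpow, mul_one, hw1])
      hB2 hB'2 x hx
    exact h
  -- derivative of dy₁
  have odeMw : ∀ t ∈ Icc (1:ℝ) 2, p t * u t + r t * w t = (q t * u t - t * w t) / t ^ 2 := by
    intro t ht
    have htpos := hIccpos t ht
    rw [hpdef, hrdef]
    field_simp
    ring
  have odeMw₂ : ∀ t ∈ Icc (1:ℝ) 2, p t * u₂ t + r t * w₂ t = (q t * u₂ t - t * w₂ t) / t ^ 2 := by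
    intro t ht
    have htpos := hIccpos t ht
    rw [hpdef, hrdef]
    field_simp
    ring
  have claim2 : ∀ x : ℝ, 0 < x → HasDerivAt dy₁ (ddy₁ x) x := by
    intro x hx
    have h := piecewise_hasDerivAt (fun y => q₁ * y ^ (q₁ - 1)) w
      (fun y => C₁ * q₂ * y ^ (q₂ - 1) + C₂ * (-q₂) * y ^ (-q₂ - 1))
      (fun y => q₁ * (q₁ - 1) * y ^ (q₁ - 2))
      (fun t => p t * u t + r t * w t)
      (fun y => C₁ * q₂ * (q₂ - 1) * y ^ (q₂ - 2) + C₂ * (-q₂) * (-q₂ - 1) * y ^ (-q₂ - 2))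
      (fun y hy => by
        simpa [show q₁ - 1 - 1 = q₁ - 2 by ring] using hasDerivAt_Crpow q₁ (q₁ - 1) hy)
      hw
      (fun y hy => by
        have h0 : (0:ℝ) < y := lt_of_lt_of_le two_pos hy
        have := (hasDerivAt_Crpow (C₁ * q₂) (q₂ - 1) h0).add
          (hasDerivAt_Crpow (C₂ * (-q₂)) (-q₂ - 1) h0)
        simpa [Pi.add_def, show q₂ - 1 - 1 = q₂ - 2 by ring, show -q₂ - 1 - 1 = -q₂ - 2 by ring] using this)
      (by show q₁ * (1:ℝ) ^ (q₁ - 1) = w 1; rw [Real.one_rpow, mul_one, hw1])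
      (by
        show q₁ * (q₁ - 1) * (1:ℝ) ^ (q₁ - 2) = p 1 * u 1 + r 1 * w 1
        rw [Real.one_rpow, odeMw 1 ⟨le_rfl, one_le_two⟩, hu1, hw1,
          hqa 1 ⟨zero_le_one, le_rfl⟩]
        norm_num
        ring)
      hB'2
      (by
        show p 2 * u 2 + r 2 * w 2 = C₁ * q₂ * (q₂ - 1) * (2:ℝ) ^ (q₂ - 2) + C₂ * (-q₂) * (-q₂ - 1) * (2:ℝ) ^ (-q₂ - 2)
        rw [odeMw 2 ⟨one_le_two, le_rfl⟩, hB2, hB'2,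
          rpow_sub_two' two_pos q₂, rpow_sub_two' two_pos (-q₂),
          rpow_sub_one' two_pos q₂, rpow_sub_one' two_pos (-q₂), hqb 2 (by norm_num)]
        have hTne : T ≠ 0 := hT.ne'
        rw [h2negq₂, ← hTdef]
        field_simp
        ring)
      x hx
    -- identify the piecewise derivative with ddy₁ x
    have heq : (if x < 1 then q₁ * (q₁ - 1) * x ^ (q₁ - 2)
        else if x ≤ 2 then p x * u x + r x * w x
        else C₁ * q₂ * (q₂ - 1) * x ^ (q₂ - 2) + C₂ * (-q₂) * (-q₂ - 1) * x ^ (-q₂ - 2))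
        = ddy₁ x := by
      rcases lt_or_ge x 1 with h1 | h1
      · rw [if_pos h1]
        simp only [hddy₁def, hy₁def, hdy₁def, if_pos h1]
        rw [hqa x ⟨hx.le, h1.le⟩, rpow_sub_two' hx q₁, rpow_sub_one' hx q₁]
        field_simp
      · rcases le_or_gt x 2 with h2 | h2
        · rw [if_neg (not_lt.2 h1), if_pos h2]
          simp only [hddy₁def]
          rw [hy₁M x ⟨h1, h2⟩, hdy₁M x ⟨h1, h2⟩, odeMw x ⟨h1, h2⟩]
        · rw [if_neg (not_lt.2 h1), if_neg (not_le.2 h2)]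
          simp only [hddy₁def, hy₁def, hdy₁def, if_neg (not_lt.2 h1), if_neg (not_le.2 h2)]
          rw [hqb x (le_of_lt h2), rpow_sub_two' hx q₂, rpow_sub_two' hx (-q₂),
            rpow_sub_one' hx q₂, rpow_sub_one' hx (-q₂)]
          field_simp
          ring
    rw [← heq]
    exact h
  -- clean matching facts for y₂ at 1
  have hα : u₂ 1 = C₃ + C₄ := by rw [hC₃def, hC₄def]; field_simp; ring
  have hβ : w₂ 1 = C₃ * (-q₁) + C₄ * q₁ := by rw [hC₃def, hC₄def]; field_simp; ring
  -- derivative of y₂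
  have claim3 : ∀ x : ℝ, 0 < x → HasDerivAt y₂ (dy₂ x) x := by
    intro x hx
    exact piecewise_hasDerivAt (fun y => C₃ * y ^ (-q₁) + C₄ * y ^ q₁) u₂
      (fun y => y ^ (-q₂))
      (fun y => C₃ * (-q₁) * y ^ (-q₁ - 1) + C₄ * q₁ * y ^ (q₁ - 1)) w₂
      (fun y => -q₂ * y ^ (-q₂ - 1))
      (fun y hy => (hasDerivAt_Crpow C₃ (-q₁) hy).add (hasDerivAt_Crpow C₄ q₁ hy))
      hu₂
      (fun y hy => Real.hasDerivAt_rpow_const (Or.inl (lt_of_lt_of_le two_pos hy).ne'))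
      hD1.symm hD'1.symm hu₂2 hw₂2 x hx
  -- derivative of dy₂
  have claim4 : ∀ x : ℝ, 0 < x → HasDerivAt dy₂ (ddy₂ x) x := by
    intro x hx
    have h := piecewise_hasDerivAt
      (fun y => C₃ * (-q₁) * y ^ (-q₁ - 1) + C₄ * q₁ * y ^ (q₁ - 1)) w₂
      (fun y => -q₂ * y ^ (-q₂ - 1))
      (fun y => C₃ * (-q₁) * (-q₁ - 1) * y ^ (-q₁ - 2) + C₄ * q₁ * (q₁ - 1) * y ^ (q₁ - 2))
      (fun t => p t * u₂ t + r t * w₂ t)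
      (fun y => -q₂ * (-q₂ - 1) * y ^ (-q₂ - 2))
      (fun y hy => by
        have := (hasDerivAt_Crpow (C₃ * (-q₁)) (-q₁ - 1) hy).add
          (hasDerivAt_Crpow (C₄ * q₁) (q₁ - 1) hy)
        simpa [Pi.add_def, show -q₁ - 1 - 1 = -q₁ - 2 by ring, show q₁ - 1 - 1 = q₁ - 2 by ring] using this)
      hw₂
      (fun y hy => by
        have h0 : (0:ℝ) < y := lt_of_lt_of_le two_pos hy
        simpa [show -q₂ - 1 - 1 = -q₂ - 2 by ring] using hasDerivAt_Crpow (-q₂) (-q₂ - 1) h0)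
      hD'1.symm
      (by
        show C₃ * (-q₁) * (-q₁ - 1) * (1:ℝ) ^ (-q₁ - 2) + C₄ * q₁ * (q₁ - 1) * (1:ℝ) ^ (q₁ - 2)
          = p 1 * u₂ 1 + r 1 * w₂ 1
        rw [Real.one_rpow, Real.one_rpow, odeMw₂ 1 ⟨le_rfl, one_le_two⟩,
          hqa 1 ⟨zero_le_one, le_rfl⟩, hα, hβ]
        norm_num
        ring)
      hw₂2
      (by
        show p 2 * u₂ 2 + r 2 * w₂ 2 = -q₂ * (-q₂ - 1) * (2:ℝ) ^ (-q₂ - 2)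
        rw [odeMw₂ 2 ⟨one_le_two, le_rfl⟩, hqb 2 (by norm_num), hu₂2, hw₂2,
          rpow_sub_two' two_pos (-q₂), rpow_sub_one' two_pos (-q₂)]
        field_simp
        ring)
      x hx
    have heq : (if x < 1 then C₃ * (-q₁) * (-q₁ - 1) * x ^ (-q₁ - 2) + C₄ * q₁ * (q₁ - 1) * x ^ (q₁ - 2)
        else if x ≤ 2 then p x * u₂ x + r x * w₂ x
        else -q₂ * (-q₂ - 1) * x ^ (-q₂ - 2)) = ddy₂ x := by
      rcases lt_or_ge x 1 with h1 | h1
      · rw [if_pos h1]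
        simp only [hddy₂def, hy₂def, hdy₂def, if_pos h1]
        rw [hqa x ⟨hx.le, h1.le⟩, rpow_sub_two' hx (-q₁), rpow_sub_two' hx q₁,
          rpow_sub_one' hx (-q₁), rpow_sub_one' hx q₁]
        field_simp
        ring
      · rcases le_or_gt x 2 with h2 | h2
        · rw [if_neg (not_lt.2 h1), if_pos h2]
          simp only [hddy₂def]
          rw [hy₂M x ⟨h1, h2⟩, hdy₂M x ⟨h1, h2⟩, odeMw₂ x ⟨h1, h2⟩]
        · rw [if_neg (not_lt.2 h1), if_neg (not_le.2 h2)]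
          simp only [hddy₂def, hy₂def, hdy₂def, if_neg (not_lt.2 h1), if_neg (not_le.2 h2)]
          rw [hqb x (le_of_lt h2), rpow_sub_two' hx (-q₂), rpow_sub_one' hx (-q₂)]
          field_simp
          ring
    rw [← heq]
    exact h
  -- continuity
  have hy₁c : ContinuousOn y₁ (Ioi 0) := fun x hx => (claim1 x hx).continuousAt.continuousWithinAt
  have hdy₁c : ContinuousOn dy₁ (Ioi 0) := fun x hx => (claim2 x hx).continuousAt.continuousWithinAt
  have hy₂c : ContinuousOn y₂ (Ioi 0) := fun x hx => (claim3 x hx).continuousAt.continuousWithinAt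
  have hdy₂c : ContinuousOn dy₂ (Ioi 0) := fun x hx => (claim4 x hx).continuousAt.continuousWithinAt
  have hqIoi : ContinuousOn q (Ioi 0) := hqc.mono Ioi_subset_Ici_self
  have hdd₁c : ContinuousOn ddy₁ (Ioi 0) := by
    apply ContinuousOn.div ((hqIoi.mul hy₁c).sub (continuousOn_id.mul hdy₁c))
      ((continuous_pow 2).continuousOn)
    exact fun x hx => pow_ne_zero 2 (ne_of_gt hx)
  have hdd₂c : ContinuousOn ddy₂ (Ioi 0) := by
    apply ContinuousOn.div ((hqIoi.mul hy₂c).sub (continuousOn_id.mul hdy₂c))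
      ((continuous_pow 2).continuousOn)
    exact fun x hx => pow_ne_zero 2 (ne_of_gt hx)
  -- boundary values
  have hy₁1 : y₁ 1 = 1 := by rw [hy₁M 1 ⟨le_rfl, one_le_two⟩, hu1]
  have hdy₁1 : dy₁ 1 = q₁ := by rw [hdy₁M 1 ⟨le_rfl, one_le_two⟩, hw1]
  have hy₂2 : y₂ 2 = (2:ℝ) ^ (-q₂) := by rw [hy₂M 2 ⟨one_le_two, le_rfl⟩, hu₂2]
  have hdy₂2 : dy₂ 2 = -q₂ * (2:ℝ) ^ (-q₂ - 1) := by rw [hdy₂M 2 ⟨one_le_two, le_rfl⟩, hw₂2]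
  have hy₂2pos : 0 < y₂ 2 := by rw [hy₂2]; exact Real.rpow_pos_of_pos two_pos _
  have hdy₂2neg : dy₂ 2 < 0 := by
    rw [hdy₂2]
    have := Real.rpow_pos_of_pos two_pos (-q₂ - 1)
    nlinarith
  -- derivative of x * dy
  have hgd₁ : ∀ t : ℝ, 0 < t → HasDerivAt (fun x => x * dy₁ x) (q t * y₁ t / t) t := by
    intro t ht
    have h := (hasDerivAt_id' t).mul (claim2 t ht)
    have e : q t * y₁ t / t = 1 * dy₁ t + t * ddy₁ t := by
      simp only [hddy₁def]
      field_simp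
      ring
    rw [e]; exact h
  have hgd₂ : ∀ t : ℝ, 0 < t → HasDerivAt (fun x => x * dy₂ x) (q t * y₂ t / t) t := by
    intro t ht
    have h := (hasDerivAt_id' t).mul (claim4 t ht)
    have e : q t * y₂ t / t = 1 * dy₂ t + t * ddy₂ t := by
      simp only [hddy₂def]
      field_simp
      ring
    rw [e]; exact h
  -- positivity of y₁ on [1,2]
  have pos1 : ∀ x ∈ Icc (1:ℝ) 2, 0 < y₁ x := by
    by_contra hcon
    push_neg at hcon
    obtain ⟨c, hcmem, hc0⟩ := hcon
    set Tset : Set ℝ := Icc (1:ℝ) 2 ∩ y₁ ⁻¹' (Iic 0) with hTsetdef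
    have hTne : Tset.Nonempty := ⟨c, hcmem, hc0⟩
    have hTcl : IsClosed Tset :=
      (hy₁c.mono (fun t ht => lt_of_lt_of_le one_pos ht.1)).preimage_isClosed_of_isClosed
        isClosed_Icc isClosed_Iic
    have hTbdd : BddBelow Tset := ⟨1, fun x hx => hx.1.1⟩
    set m := sInf Tset with hmdef
    have hmT : m ∈ Tset := hTcl.csInf_mem hTne hTbdd
    have hm1 : 1 < m := by
      rcases lt_or_eq_of_le hmT.1.1 with h | h
      · exact h
      · exfalso
        have h2 : y₁ m ≤ 0 := hmT.2
        rw [← h, hy₁1] at h2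
        linarith
    have hsubm : Icc (1:ℝ) m ⊆ Ioi 0 := fun t ht => lt_of_lt_of_le one_pos ht.1
    have hprev : ∀ t ∈ Ico (1:ℝ) m, 0 < y₁ t := by
      intro t ht
      by_contra hle
      push_neg at hle
      have : t ∈ Tset := ⟨⟨ht.1, le_trans ht.2.le hmT.1.2⟩, hle⟩
      exact absurd (csInf_le hTbdd this) (not_le.2 ht.2)
    have hgmono : StrictMonoOn (fun x => x * dy₁ x) (Icc 1 m) := by
      apply strictMonoOn_of_deriv_pos (convex_Icc 1 m)
        (fun s hs => ((hgd₁ s (hsubm hs)).continuousAt.continuousWithinAt))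
      intro t ht
      rw [interior_Icc] at ht
      have ht0 : (0:ℝ) < t := lt_trans one_pos ht.1
      rw [(hgd₁ t ht0).deriv]
      have hyt : 0 < y₁ t := hprev t ⟨ht.1.le, ht.2⟩
      have hqt : 0 < q t := hqpos t (le_of_lt ht0)
      positivity
    have hdypos : ∀ t ∈ Ioo (1:ℝ) m, 0 < dy₁ t := by
      intro t ht
      have h1 := hgmono (left_mem_Icc.2 (le_of_lt hm1)) ⟨ht.1.le, ht.2.le⟩ ht.1
      simp only [] at h1
      rw [one_mul, hdy₁1] at h1
      by_contra hle
      push_neg at hle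
      have ht0 : (0:ℝ) < t := lt_trans one_pos ht.1
      nlinarith
    have hymono : StrictMonoOn y₁ (Icc 1 m) := by
      apply strictMonoOn_of_deriv_pos (convex_Icc 1 m) (hy₁c.mono hsubm)
      intro t ht
      rw [interior_Icc] at ht
      rw [(claim1 t (lt_trans one_pos ht.1)).deriv]
      exact hdypos t ht
    have h1 : (1:ℝ) < y₁ m := by
      have := hymono (left_mem_Icc.2 hm1.le) (right_mem_Icc.2 hm1.le) hm1
      rwa [hy₁1] at this
    have h2 : y₁ m ≤ 0 := hmT.2
    linarith
  -- dy₁ 2 is positive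
  have hgmono12 : StrictMonoOn (fun x => x * dy₁ x) (Icc 1 2) := by
    apply strictMonoOn_of_deriv_pos (convex_Icc 1 2)
      (fun s hs => ((hgd₁ s (lt_of_lt_of_le one_pos hs.1)).continuousAt.continuousWithinAt))
    intro t ht
    rw [interior_Icc] at ht
    have ht0 : (0:ℝ) < t := lt_trans one_pos ht.1
    rw [(hgd₁ t ht0).deriv]
    have hyt : 0 < y₁ t := pos1 t ⟨ht.1.le, ht.2.le⟩
    have hqt : 0 < q t := hqpos t (le_of_lt ht0)
    positivity
  have hdy₁2pos : 0 < dy₁ 2 := by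
    have h1 := hgmono12 (left_mem_Icc.2 one_le_two) (right_mem_Icc.2 one_le_two) one_lt_two
    simp only [] at h1
    rw [one_mul, hdy₁1] at h1
    nlinarith
  -- positivity of y₂ on [1,2]
  have pos2 : ∀ x ∈ Icc (1:ℝ) 2, 0 < y₂ x := by
    by_contra hcon
    push_neg at hcon
    obtain ⟨c, hcmem, hc0⟩ := hcon
    set Tset : Set ℝ := Icc (1:ℝ) 2 ∩ y₂ ⁻¹' (Iic 0) with hTsetdef
    have hTne : Tset.Nonempty := ⟨c, hcmem, hc0⟩
    have hTcl : IsClosed Tset :=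
      (hy₂c.mono (fun t ht => lt_of_lt_of_le one_pos ht.1)).preimage_isClosed_of_isClosed
        isClosed_Icc isClosed_Iic
    have hTbdd : BddAbove Tset := ⟨2, fun x hx => hx.1.2⟩
    set m := sSup Tset with hmdef
    have hmT : m ∈ Tset := hTcl.csSup_mem hTne hTbdd
    have hm1 : (1:ℝ) ≤ m := hmT.1.1
    have hm0 : (0:ℝ) < m := lt_of_lt_of_le one_pos hm1
    have hm2 : m < 2 := by
      rcases lt_or_eq_of_le hmT.1.2 with h | h
      · exact h
      · exfalso
        have h2 : y₂ m ≤ 0 := hmT.2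
        rw [h] at h2
        linarith
    have hsubm : Icc m 2 ⊆ Ioi 0 := fun t ht => lt_of_lt_of_le hm0 ht.1
    have hprev : ∀ t ∈ Ioc m (2:ℝ), 0 < y₂ t := by
      intro t ht
      by_contra hle
      push_neg at hle
      have : t ∈ Tset := ⟨⟨le_trans hm1 ht.1.le, ht.2⟩, hle⟩
      exact absurd (le_csSup hTbdd this) (not_le.2 ht.1)
    have hgmono : StrictMonoOn (fun x => x * dy₂ x) (Icc m 2) := by
      apply strictMonoOn_of_deriv_pos (convex_Icc m 2)
        (fun s hs => ((hgd₂ s (hsubm hs)).continuousAt.continuousWithinAt))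
      intro t ht
      rw [interior_Icc] at ht
      have ht0 : (0:ℝ) < t := lt_trans hm0 ht.1
      rw [(hgd₂ t ht0).deriv]
      have hyt : 0 < y₂ t := hprev t ⟨ht.1, ht.2.le⟩
      have hqt : 0 < q t := hqpos t (le_of_lt ht0)
      positivity
    have hdyneg : ∀ t ∈ Ioo m (2:ℝ), dy₂ t < 0 := by
      intro t ht
      have h1 := hgmono ⟨ht.1.le, ht.2.le⟩ (right_mem_Icc.2 (le_of_lt hm2)) ht.2
      simp only [] at h1
      have ht0 : (0:ℝ) < t := lt_trans hm0 ht.1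
      by_contra hle
      push_neg at hle
      nlinarith [hdy₂2neg, mul_nonneg ht0.le hle]
    have hyanti : StrictAntiOn y₂ (Icc m 2) := by
      apply strictAntiOn_of_deriv_neg (convex_Icc m 2) (hy₂c.mono hsubm)
      intro t ht
      rw [interior_Icc] at ht
      rw [(claim3 t (lt_trans hm0 ht.1)).deriv]
      exact hdyneg t ht
    have h1 : y₂ 2 < y₂ m := hyanti (left_mem_Icc.2 hm2.le) (right_mem_Icc.2 hm2.le) hm2
    have h2 : y₂ m ≤ 0 := hmT.2
    linarith
  -- dy₂ 1 is negative
  have hgmono12' : StrictMonoOn (fun x => x * dy₂ x) (Icc 1 2) := by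
    apply strictMonoOn_of_deriv_pos (convex_Icc 1 2)
      (fun s hs => ((hgd₂ s (lt_of_lt_of_le one_pos hs.1)).continuousAt.continuousWithinAt))
    intro t ht
    rw [interior_Icc] at ht
    have ht0 : (0:ℝ) < t := lt_trans one_pos ht.1
    rw [(hgd₂ t ht0).deriv]
    have hyt : 0 < y₂ t := pos2 t ⟨ht.1.le, ht.2.le⟩
    have hqt : 0 < q t := hqpos t (le_of_lt ht0)
    positivity
  have hdy₂1neg : dy₂ 1 < 0 := by
    have h1 := hgmono12' (left_mem_Icc.2 one_le_two) (right_mem_Icc.2 one_le_two) one_lt_two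
    simp only [] at h1
    rw [one_mul] at h1
    nlinarith [hdy₂2neg]
  -- constants sign
  have hu2pos : 0 < u 2 := by
    have := pos1 2 ⟨one_le_two, le_rfl⟩
    rwa [hy₁M 2 ⟨one_le_two, le_rfl⟩] at this
  have hw2pos : 0 < w 2 := by
    have := hdy₁2pos
    rwa [hdy₁M 2 ⟨one_le_two, le_rfl⟩] at this
  have hu₂1pos : 0 < u₂ 1 := by
    have := pos2 1 ⟨le_rfl, one_le_two⟩
    rwa [hy₂M 1 ⟨le_rfl, one_le_two⟩] at this
  have hw₂1neg : w₂ 1 < 0 := by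
    have := hdy₂1neg
    rwa [hdy₂M 1 ⟨le_rfl, one_le_two⟩] at this
  have hC₁pos : 0 < C₁ := by
    rw [hC₁def]
    apply div_pos
    · nlinarith
    · positivity
  have hC₃pos : 0 < C₃ := by
    rw [hC₃def]
    apply div_pos
    · nlinarith
    · positivity
  -- Wronskian
  set G : ℝ → ℝ := fun x => x * (y₁ x * dy₂ x - y₂ x * dy₁ x) with hGdef
  have hGd : ∀ x : ℝ, 0 < x → HasDerivAt G 0 x := by
    intro x hx
    have h : HasDerivAt G
        (1 * (y₁ x * dy₂ x - y₂ x * dy₁ x) +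
          x * ((dy₁ x * dy₂ x + y₁ x * ddy₂ x) - (dy₂ x * dy₁ x + y₂ x * ddy₁ x))) x :=
      (hasDerivAt_id x).mul (((claim1 x hx).mul (claim4 x hx)).sub ((claim3 x hx).mul (claim2 x hx)))
    have he : (1 * (y₁ x * dy₂ x - y₂ x * dy₁ x) +
          x * ((dy₁ x * dy₂ x + y₁ x * ddy₂ x) - (dy₂ x * dy₁ x + y₂ x * ddy₁ x))) = 0 := by
      simp only [hddy₁def, hddy₂def]
      field_simp
      ring
    rwa [he] at h
  have hGconst : ∀ x : ℝ, 0 < x → G x = G 1 := by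
    intro x hx
    rcases le_total x 1 with hx1 | hx1
    · have hkey := constant_of_has_deriv_right_zero (f := G) (a := x) (b := 1)
        (fun s hs => (hGd s (lt_of_lt_of_le hx hs.1)).continuousAt.continuousWithinAt)
        (fun s hs => (hGd s (lt_of_lt_of_le hx hs.1)).hasDerivWithinAt)
      exact (hkey 1 ⟨hx1, le_rfl⟩).symm
    · have hkey := constant_of_has_deriv_right_zero (f := G) (a := 1) (b := x)
        (fun s hs => (hGd s (lt_of_lt_of_le one_pos hs.1)).continuousAt.continuousWithinAt)
        (fun s hs => (hGd s (lt_of_lt_of_le one_pos hs.1)).hasDerivWithinAt)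
      exact hkey x ⟨hx1, le_rfl⟩
  have hG1 : G 1 = w₂ 1 - u₂ 1 * q₁ := by
    simp only [hGdef]
    rw [hy₁1, hdy₁1, hy₂M 1 ⟨le_rfl, one_le_two⟩, hdy₂M 1 ⟨le_rfl, one_le_two⟩]
    ring
  have hC₃G : -(2 * q₁ * C₃) = w₂ 1 - u₂ 1 * q₁ := by
    rw [hC₃def]
    field_simp
    ring
  have wronsk : ∀ x : ℝ, 0 < x → y₁ x * dy₂ x - y₂ x * dy₁ x = -(2 * q₁ * C₃) / x := by
    intro x hx
    have h := hGconst x hx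
    rw [hG1] at h
    simp only [hGdef] at h
    rw [eq_div_iff hx.ne', hC₃G]
    linarith [h]
  -- ODE identities
  have ode₁ : ∀ x : ℝ, 0 < x → x ^ 2 * ddy₁ x + x * dy₁ x - q x * y₁ x = 0 := by
    intro x hx
    simp only [hddy₁def]
    field_simp
    ring
  have ode₂ : ∀ x : ℝ, 0 < x → x ^ 2 * ddy₂ x + x * dy₂ x - q x * y₂ x = 0 := by
    intro x hx
    simp only [hddy₂def]
    field_simp
    ring
  refine ⟨y₁, y₂, dy₁, dy₂, ddy₁, ddy₂, C₁, C₂, C₃, C₄, claim1, claim2, hdd₁c, claim3, claim4,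
    hdd₂c, ode₁, ode₂, ne_of_gt hC₁pos, ne_of_gt hC₃pos, ?_, ?_, pos1, ?_, ?_, pos2, wronsk⟩
  · intro x hx
    simp only [hy₁def, if_pos hx.2]
  · intro x hx
    have h2 : (2:ℝ) < x := hx
    simp only [hy₁def, if_neg (by linarith : ¬ x < 1), if_neg (not_le.2 h2)]
  · intro x hx
    simp only [hy₂def, if_pos hx.2]
  · intro x hx
    have h2 : (2:ℝ) < x := hx
    simp only [hy₂def, if_neg (by linarith : ¬ x < 1), if_neg (not_le.2 h2)]
end
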